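/- arXiv:2510.02195 — 5 statements merged into one kernel-verified Lean document; each statement's English description precedes it below -/
import Mathlib

section
/- Let A be a binary symmetric algebra over a field of characteristic zero that is Yagzhev nil of nilindex 4 (i.e., T_q(x) = 0 for all q ≥ 4). Then A is Gerstenhaber nil of nilindex 6: every bracketed product of at least 6 copies of any element x vanishes. -/
open Finset

/-- `IsProd mul x a m` : `a` is a product (under some bracketing) of exactly `m`
copies of the element `x`. -/
inductive IsProd {k A : Type*} [Field k] [AddCommGroup A] [Module k A]
    (mul : A →ₗ[k] A →ₗ[k] A) (x : A) : A → ℕ → Prop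
  | base : IsProd mul x x 1
  | mul (a b : A) (m n : ℕ) (ha : IsProd mul x a m) (hb : IsProd mul x b n) :
      IsProd mul x (mul a b) (m + n)

lemma isProd_one_le {k A : Type*} [Field k] [AddCommGroup A] [Module k A]
    {mul : A →ₗ[k] A →ₗ[k] A} {x a : A} {m : ℕ} (h : IsProd mul x a m) : 1 ≤ m := by
  induction h with
  | base => exact le_rfl
  | mul a b p q ha hb iha ihb => omega

lemma pol1 {k A : Type*} [Field k] [AddCommGroup A] [Module k A]
    (mul : A →ₗ[k] A →ₗ[k] A) (x y : A) :
    (18:k) • ((4:k) • mul (x+y) (mul (x+y) (mul (x+y) (x+y))) + mul (mul (x+y) (x+y)) (mul (x+y) (x+y)))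
  - (9:k) • ((4:k) • mul (x+(2:k)•y) (mul (x+(2:k)•y) (mul (x+(2:k)•y) (x+(2:k)•y))) + mul (mul (x+(2:k)•y) (x+(2:k)•y)) (mul (x+(2:k)•y) (x+(2:k)•y)))
  + (2:k) • ((4:k) • mul (x+(3:k)•y) (mul (x+(3:k)•y) (mul (x+(3:k)•y) (x+(3:k)•y))) + mul (mul (x+(3:k)•y) (x+(3:k)•y)) (mul (x+(3:k)•y) (x+(3:k)•y)))
  = (11:k) • ((4:k) • mul x (mul x (mul x x)) + mul (mul x x) (mul x x))
  + (36:k) • ((4:k) • mul y (mul y (mul y y)) + mul (mul y y) (mul y y))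
  + (6:k) • ((4:k) • (mul y (mul x (mul x x)) + mul x (mul y (mul x x)) + mul x (mul x (mul y x)) + mul x (mul x (mul x y)))
      + (mul (mul y x) (mul x x) + mul (mul x y) (mul x x) + mul (mul x x) (mul y x) + mul (mul x x) (mul x y))) := by
  simp only [map_add, map_smul, LinearMap.add_apply, LinearMap.smul_apply]
  module

lemma pol2 {k A : Type*} [Field k] [AddCommGroup A] [Module k A]
    (mul : A →ₗ[k] A →ₗ[k] A) (x y : A) :
    (-5:k) • ((4:k) • mul (x+y) (mul (x+y) (mul (x+y) (x+y))) + mul (mul (x+y) (x+y)) (mul (x+y) (x+y)))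
  + (4:k) • ((4:k) • mul (x+(2:k)•y) (mul (x+(2:k)•y) (mul (x+(2:k)•y) (x+(2:k)•y))) + mul (mul (x+(2:k)•y) (x+(2:k)•y)) (mul (x+(2:k)•y) (x+(2:k)•y)))
  - (1:k) • ((4:k) • mul (x+(3:k)•y) (mul (x+(3:k)•y) (mul (x+(3:k)•y) (x+(3:k)•y))) + mul (mul (x+(3:k)•y) (x+(3:k)•y)) (mul (x+(3:k)•y) (x+(3:k)•y)))
  = (-2:k) • ((4:k) • mul x (mul x (mul x x)) + mul (mul x x) (mul x x))
  + (-22:k) • ((4:k) • mul y (mul y (mul y y)) + mul (mul y y) (mul y y))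
  + (2:k) • ((4:k) • (mul y (mul y (mul x x)) + mul y (mul x (mul y x)) + mul y (mul x (mul x y)) + mul x (mul y (mul y x)) + mul x (mul y (mul x y)) + mul x (mul x (mul y y)))
      + (mul (mul y y) (mul x x) + mul (mul y x) (mul y x) + mul (mul y x) (mul x y) + mul (mul x y) (mul y x) + mul (mul x y) (mul x y) + mul (mul x x) (mul y y))) := by
  simp only [map_add, map_smul, LinearMap.add_apply, LinearMap.smul_apply]
  module

/-- A binary symmetric algebra that is Yagzhev nil of nilindex 4 is
Gerstenhaber nil of nilindex 6. -/
theorem stmt8 {k A : Type*} [Field k] [CharZero k] [AddCommGroup A] [Module k A]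
    (mul : A →ₗ[k] A →ₗ[k] A)
    (hcomm : ∀ x y : A, mul x y = mul y x)
    (T : ℕ → A → A)
    (hT1 : ∀ x, T 1 x = x)
    (hTq : ∀ q, 1 < q → ∀ x, T q x =
      ∑ pr ∈ (Finset.HasAntidiagonal.antidiagonal q).filter (fun pr => pr.1 ≠ 0 ∧ pr.2 ≠ 0),
        mul (T pr.1 x) (T pr.2 x))
    (hYnil : ∀ q, 4 ≤ q → ∀ x : A, T q x = 0) :
    ∀ (x a : A) (m : ℕ), IsProd mul x a m → 6 ≤ m → a = 0 := by
  have sm : ∀ (c : k) (v : A), c ≠ 0 → c • v = 0 → v = 0 := by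
    intro c v hc h
    rcases smul_eq_zero.mp h with h | h
    · exact absurd h hc
    · exact h
  have ht2 : ∀ z : A, T 2 z = mul z z := by
    intro z
    rw [hTq 2 one_lt_two,
      show (Finset.HasAntidiagonal.antidiagonal 2).filter (fun pr => pr.1 ≠ 0 ∧ pr.2 ≠ 0) = {((1:ℕ),(1:ℕ))} from by decide,
      Finset.sum_singleton, hT1]
  have ht3 : ∀ z : A, T 3 z = mul z (mul z z) + mul z (mul z z) := by
    intro z
    rw [hTq 3 (by norm_num),
      show (Finset.HasAntidiagonal.antidiagonal 3).filter (fun pr => pr.1 ≠ 0 ∧ pr.2 ≠ 0) = {((1:ℕ),(2:ℕ)),(2,1)} from by decide,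
      Finset.sum_insert (by decide), Finset.sum_singleton, hT1, ht2 z, hcomm (mul z z) z]
  -- the Yagzhev identity of degree 4
  have hF : ∀ z : A, (4:k) • mul z (mul z (mul z z)) + mul (mul z z) (mul z z) = 0 := by
    intro z
    have h4 := hYnil 4 le_rfl z
    rw [hTq 4 (by norm_num),
      show (Finset.HasAntidiagonal.antidiagonal 4).filter (fun pr => pr.1 ≠ 0 ∧ pr.2 ≠ 0) = {((1:ℕ),(3:ℕ)),(2,2),(3,1)} from by decide,
      Finset.sum_insert (by decide), Finset.sum_insert (by decide), Finset.sum_singleton,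
      hT1, ht2 z, ht3 z, hcomm (mul z (mul z z) + mul z (mul z z)) z] at h4
    rw [← h4]
    simp only [map_add, LinearMap.add_apply]
    module
  -- the Yagzhev identity of degree 5
  have hI5 : ∀ z : A, mul (mul z z) (mul z (mul z z)) = 0 := by
    intro z
    have h5 := hYnil 5 (by norm_num) z
    rw [hTq 5 (by norm_num),
      show (Finset.HasAntidiagonal.antidiagonal 5).filter (fun pr => pr.1 ≠ 0 ∧ pr.2 ≠ 0) = {((1:ℕ),(4:ℕ)),(2,3),(3,2),(4,1)} from by decide,
      Finset.sum_insert (by decide), Finset.sum_insert (by decide), Finset.sum_insert (by decide),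
      Finset.sum_singleton, hYnil 4 le_rfl z, hT1, ht2 z, ht3 z,
      hcomm (mul z (mul z z) + mul z (mul z z)) (mul z z)] at h5
    refine sm 4 _ (by norm_num) ?_
    rw [← h5]
    simp only [map_add, map_zero, LinearMap.zero_apply, LinearMap.add_apply, add_zero, zero_add]
    module
  -- the Yagzhev identity of degree 6
  have hI6 : ∀ z : A, mul (mul z (mul z z)) (mul z (mul z z)) = 0 := by
    intro z
    have h6 := hYnil 6 (by norm_num) z
    rw [hTq 6 (by norm_num),
      show (Finset.HasAntidiagonal.antidiagonal 6).filter (fun pr => pr.1 ≠ 0 ∧ pr.2 ≠ 0) = {((1:ℕ),(5:ℕ)),(2,4),(3,3),(4,2),(5,1)} from by decide,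
      Finset.sum_insert (by decide), Finset.sum_insert (by decide), Finset.sum_insert (by decide),
      Finset.sum_insert (by decide), Finset.sum_singleton,
      hYnil 5 (by norm_num) z, hYnil 4 le_rfl z, hT1, ht2 z, ht3 z] at h6
    refine sm 4 _ (by norm_num) ?_
    rw [← h6]
    simp only [map_add, map_zero, LinearMap.zero_apply, LinearMap.add_apply, add_zero, zero_add]
    module
  intro x a m hprod hm
  -- first polarization of the degree-4 identity
  have hP1 : ∀ y : A,
      (4:k) • (mul y (mul x (mul x x)) + mul x (mul y (mul x x)) + mul x (mul x (mul y x)) + mul x (mul x (mul x y)))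
      + (mul (mul y x) (mul x x) + mul (mul x y) (mul x x) + mul (mul x x) (mul y x) + mul (mul x x) (mul x y)) = 0 := by
    intro y
    have key := pol1 mul x y
    rw [hF (x+y), hF (x+(2:k)•y), hF (x+(3:k)•y), hF x, hF y] at key
    simp only [smul_zero, sub_zero, add_zero, zero_add] at key
    exact sm 6 _ (by norm_num) key.symm
  -- second polarization of the degree-4 identity
  have hP2 : ∀ y : A,
      (4:k) • (mul y (mul y (mul x x)) + mul y (mul x (mul y x)) + mul y (mul x (mul x y)) + mul x (mul y (mul y x)) + mul x (mul y (mul x y)) + mul x (mul x (mul y y)))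
      + (mul (mul y y) (mul x x) + mul (mul y x) (mul y x) + mul (mul y x) (mul x y) + mul (mul x y) (mul y x) + mul (mul x y) (mul x y) + mul (mul x x) (mul y y)) = 0 := by
    intro y
    have key := pol2 mul x y
    rw [hF (x+y), hF (x+(2:k)•y), hF (x+(3:k)•y), hF x, hF y] at key
    simp only [smul_zero, sub_zero, add_zero, zero_add, neg_zero] at key
    exact sm 2 _ (by norm_num) key.symm
  -- abbreviate: u = mul x x, U3 = mul x u, U4 = mul x U3, UU = mul u u
  have I4 := hF x
  have I5 := hI5 x
  have I6 := hI6 x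
  -- hB : multiplying I4 by x
  have hB : (4:k) • mul x (mul x (mul x (mul x x))) + mul x (mul (mul x x) (mul x x)) = 0 := by
    have := congrArg (fun t => mul x t) I4
    simpa only [map_add, map_smul, map_zero] using this
  -- hA : from P1 at y = mul x x
  have hA : mul x (mul (mul x x) (mul x x)) + mul x (mul x (mul x (mul x x))) + mul x (mul x (mul x (mul x x))) = 0 := by
    have h := hP1 (mul x x)
    rw [hcomm (mul x x) x, hcomm (mul x (mul x x)) (mul x x), I5] at h
    refine sm 4 _ (by norm_num) ?_
    rw [← h]
    module
  have d5a : mul x (mul x (mul x (mul x x))) = 0 := by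
    refine sm 2 _ (by norm_num) ?_
    have e : (2:k) • mul x (mul x (mul x (mul x x)))
        = ((4:k) • mul x (mul x (mul x (mul x x))) + mul x (mul (mul x x) (mul x x)))
          - (mul x (mul (mul x x) (mul x x)) + mul x (mul x (mul x (mul x x))) + mul x (mul x (mul x (mul x x)))) := by
      module
    rw [hB, hA, sub_zero] at e
    exact e
  have d5b : mul x (mul (mul x x) (mul x x)) = 0 := by
    rw [d5a, smul_zero, zero_add] at hB
    exact hB
  -- d6a : from P1 at y = mul x (mul x x)
  have d6a : mul (mul x x) (mul x (mul x (mul x x))) = 0 := by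
    have h := hP1 (mul x (mul x x))
    rw [I6, hcomm (mul x (mul x x)) (mul x x), I5, hcomm (mul x (mul x x)) x, d5a,
      hcomm (mul x (mul x (mul x x))) (mul x x)] at h
    refine sm 4 _ (by norm_num) ?_
    rw [← h]
    simp only [map_zero, smul_zero, add_zero, zero_add]
    try module
  have hUU : mul (mul x x) (mul x x) = -((4:k) • mul x (mul x (mul x x))) :=
    (add_eq_zero_iff_neg_eq.mp I4).symm
  have d6b : mul (mul x x) (mul (mul x x) (mul x x)) = 0 := by
    rw [hUU, map_neg, map_smul, d6a, smul_zero, neg_zero]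
  -- d7a : from P1 at y = mul x (mul x (mul x x))
  have d7a : mul (mul x (mul x (mul x x))) (mul x (mul x x)) = 0 := by
    have h := hP1 (mul x (mul x (mul x x)))
    rw [hcomm (mul x (mul x (mul x x))) x, hcomm (mul x (mul x (mul x x))) (mul x x),
      d6a, d5a] at h
    refine sm 4 _ (by norm_num) ?_
    rw [← h]
    simp only [map_zero, LinearMap.zero_apply, smul_zero, add_zero, zero_add]
    try module
  have d7b : mul (mul x (mul x x)) (mul x (mul x (mul x x))) = 0 := by
    rw [hcomm]; exact d7a
  have d7c : mul (mul x (mul x x)) (mul (mul x x) (mul x x)) = 0 := by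
    rw [hUU, map_neg, map_smul, d7b, smul_zero, neg_zero]
  have d7d : mul (mul (mul x x) (mul x x)) (mul x (mul x x)) = 0 := by
    rw [hcomm]; exact d7c
  -- d8a : from P2 at y = mul x (mul x x)
  have d8a : mul (mul x (mul x (mul x x))) (mul x (mul x (mul x x))) = 0 := by
    have h := hP2 (mul x (mul x x))
    rw [hcomm (mul x (mul x x)) x, hcomm (mul x (mul x x)) (mul x x), I6, I5, d5a, d7b] at h
    refine sm 4 _ (by norm_num) ?_
    rw [← h]
    simp only [map_zero, LinearMap.zero_apply, smul_zero, add_zero, zero_add]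
    try module
  have d8b : mul (mul x (mul x (mul x x))) (mul (mul x x) (mul x x)) = 0 := by
    rw [hUU, map_neg, map_smul, d8a, smul_zero, neg_zero]
  have d8c : mul (mul (mul x x) (mul x x)) (mul x (mul x (mul x x))) = 0 := by
    rw [hcomm]; exact d8b
  have d8d : mul (mul (mul x x) (mul x x)) (mul (mul x x) (mul x x)) = 0 := by
    rw [hUU]
    simp only [map_neg, map_smul, LinearMap.neg_apply, LinearMap.smul_apply, d8a,
      smul_zero, neg_zero]
  -- commuted variants
  have z41a : mul (mul x (mul x (mul x x))) x = 0 := by rw [hcomm]; exact d5a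
  have z41b : mul (mul (mul x x) (mul x x)) x = 0 := by rw [hcomm]; exact d5b
  have z32 : mul (mul x (mul x x)) (mul x x) = 0 := by rw [hcomm]; exact I5
  have z42a : mul (mul x (mul x (mul x x))) (mul x x) = 0 := by rw [hcomm]; exact d6a
  have z42b : mul (mul (mul x x) (mul x x)) (mul x x) = 0 := by rw [hcomm]; exact d6b
  -- main classification by strong induction on the product structure
  have main : ∀ (p : ℕ) (c : A), IsProd mul x c p →
      (p = 1 → c = x) ∧ (p = 2 → c = mul x x) ∧ (p = 3 → c = mul x (mul x x)) ∧
      (p = 4 → c = mul x (mul x (mul x x)) ∨ c = mul (mul x x) (mul x x)) ∧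
      (5 ≤ p → c = 0) := by
    intro p c h
    induction h with
    | base =>
      refine ⟨fun _ => rfl, ?_, ?_, ?_, ?_⟩ <;> intro h <;> omega
    | mul a b p q ha hb iha ihb =>
      obtain ⟨a1, a2, a3, a4, a5⟩ := iha
      obtain ⟨b1, b2, b3, b4, b5⟩ := ihb
      have hp := isProd_one_le ha
      have hq := isProd_one_le hb
      refine ⟨by omega, ?_, ?_, ?_, ?_⟩
      · intro h
        have hp1 : p = 1 := by omega
        have hq1 : q = 1 := by omega
        rw [a1 hp1, b1 hq1]
      · intro h
        rcases Nat.lt_or_ge p 2 with h' | h'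
        · have h1 : p = 1 := by omega
          have h2 : q = 2 := by omega
          rw [a1 h1, b2 h2]
        · have h1 : p = 2 := by omega
          have h2 : q = 1 := by omega
          rw [a2 h1, b1 h2, hcomm]
      · intro h
        rcases Nat.lt_or_ge p 2 with h' | h'
        · have h1 : p = 1 := by omega
          have h2 : q = 3 := by omega
          rw [a1 h1, b3 h2]
          left; rfl
        · rcases Nat.lt_or_ge p 3 with h'' | h''
          · have h1 : p = 2 := by omega
            have h2 : q = 2 := by omega
            rw [a2 h1, b2 h2]
            right; rfl
          · have h1 : p = 3 := by omega
            have h2 : q = 1 := by omega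
            rw [a3 h1, b1 h2, hcomm]
            left; rfl
      · intro h5
        by_cases hp5 : 5 ≤ p
        · rw [a5 hp5]; simp
        · by_cases hq5 : 5 ≤ q
          · rw [b5 hq5]; simp
          · have hp4 : p ≤ 4 := by omega
            have hq4 : q ≤ 4 := by omega
            interval_cases p <;> interval_cases q
            · omega
            · omega
            · omega
            · -- (1,4)
              rw [a1 rfl]
              rcases b4 rfl with hb' | hb' <;> rw [hb']
              · exact d5a
              · exact d5b
            · omega
            · omega
            · -- (2,3)
              rw [a2 rfl, b3 rfl]; exact I5
            · -- (2,4)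
              rw [a2 rfl]
              rcases b4 rfl with hb' | hb' <;> rw [hb']
              · exact d6a
              · exact d6b
            · omega
            · -- (3,2)
              rw [a3 rfl, b2 rfl]; exact z32
            · -- (3,3)
              rw [a3 rfl, b3 rfl]; exact I6
            · -- (3,4)
              rw [a3 rfl]
              rcases b4 rfl with hb' | hb' <;> rw [hb']
              · exact d7b
              · exact d7c
            · -- (4,1)
              rw [b1 rfl]
              rcases a4 rfl with ha' | ha' <;> rw [ha']
              · exact z41a
              · exact z41b
            · -- (4,2)
              rw [b2 rfl]
              rcases a4 rfl with ha' | ha' <;> rw [ha']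
              · exact z42a
              · exact z42b
            · -- (4,3)
              rw [b3 rfl]
              rcases a4 rfl with ha' | ha' <;> rw [ha']
              · exact d7a
              · exact d7d
            · -- (4,4)
              rcases a4 rfl with ha' | ha' <;> rcases b4 rfl with hb' | hb' <;> rw [ha', hb']
              · exact d8a
              · exact d8b
              · exact d8c
              · exact d8d
  exact (main m a hprod).2.2.2.2 (by omega)
end

section
/- Let (A, μ) be a finite-dimensional complex symmetric d-linear algebra. If A is Yagzhev nil (there exists p with T_q(x) = 0 for all x and q ≥ p), then A is Engel: for each x ∈ A the operator Ad_x: y ↦ μ(x,...,x,y) is nilpotent. -/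
open Finset

section PO
variable {A : Type*} [AddCommGroup A] [Module ℂ A]

/-- `f : ℂ → A` is a polynomial function all of whose coefficients below degree `m` vanish. -/
def PO (m : ℕ) (f : ℂ → A) : Prop :=
  ∃ (N : ℕ) (v : ℕ → A), (∀ k, k < m → v k = 0) ∧ (∀ k, N ≤ k → v k = 0) ∧
    ∀ t : ℂ, f t = ∑ k ∈ Finset.range N, t ^ k • v k

lemma sum_range_ext {v : ℕ → A} {N M : ℕ} (h : N ≤ M) (hv : ∀ k, N ≤ k → v k = 0) (t : ℂ) :
    ∑ k ∈ range N, t ^ k • v k = ∑ k ∈ range M, t ^ k • v k := by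
  refine Finset.sum_subset (range_subset_range.2 h) ?_
  intro k _ hk
  rw [hv k (by simpa using hk), smul_zero]

lemma po_congr {m : ℕ} {f g : ℂ → A} (h : ∀ t, f t = g t) (hf : PO m f) : PO m g := by
  obtain ⟨N, v, h1, h2, h3⟩ := hf
  exact ⟨N, v, h1, h2, fun t => (h t) ▸ h3 t⟩

lemma po_mono {m m' : ℕ} {f : ℂ → A} (h : m' ≤ m) (hf : PO m f) : PO m' f := by
  obtain ⟨N, v, h1, h2, h3⟩ := hf
  exact ⟨N, v, fun k hk => h1 k (lt_of_lt_of_le hk h), h2, h3⟩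

lemma po_zero {m : ℕ} : PO m (fun _ : ℂ => (0 : A)) :=
  ⟨0, fun _ => 0, fun _ _ => rfl, fun _ _ => rfl, fun t => by simp⟩

lemma po_add {m : ℕ} {f g : ℂ → A} (hf : PO m f) (hg : PO m g) :
    PO m (fun t => f t + g t) := by
  obtain ⟨N, v, h1, h2, h3⟩ := hf
  obtain ⟨N', w, g1, g2, g3⟩ := hg
  refine ⟨max N N', fun k => v k + w k, fun k hk => ?_, fun k hk => ?_, fun t => ?_⟩
  · show v k + w k = 0
    rw [h1 k hk, g1 k hk, add_zero]
  · show v k + w k = 0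
    rw [h2 k (le_trans (le_max_left _ _) hk), g2 k (le_trans (le_max_right _ _) hk), add_zero]
  · show f t + g t = _
    simp only [smul_add, Finset.sum_add_distrib]
    rw [h3 t, g3 t, sum_range_ext (le_max_left N N') h2 t,
      sum_range_ext (le_max_right N N') g2 t]

lemma po_neg {m : ℕ} {f : ℂ → A} (hf : PO m f) : PO m (fun t => -f t) := by
  obtain ⟨N, v, h1, h2, h3⟩ := hf
  refine ⟨N, fun k => -v k, fun k hk => ?_, fun k hk => ?_, fun t => ?_⟩
  · show -v k = 0; rw [h1 k hk, neg_zero]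
  · show -v k = 0; rw [h2 k hk, neg_zero]
  · show -f t = _
    rw [h3 t]
    simp

lemma po_sub {m : ℕ} {f g : ℂ → A} (hf : PO m f) (hg : PO m g) :
    PO m (fun t => f t - g t) := by
  have := po_add hf (po_neg hg)
  exact po_congr (fun t => by simp [sub_eq_add_neg]) this

lemma po_sum {ι : Type*} {m : ℕ} (s : Finset ι) (f : ι → ℂ → A)
    (h : ∀ i ∈ s, PO m (f i)) : PO m (fun t => ∑ i ∈ s, f i t) := by
  classical
  induction s using Finset.induction_on with
  | empty => exact po_congr (fun t => by simp) po_zero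
  | @insert a s' hx ih =>
    refine po_congr (fun t => (Finset.sum_insert hx).symm) ?_
    exact po_add (h a (Finset.mem_insert_self a s'))
      (ih (fun i hi => h i (Finset.mem_insert_of_mem hi)))

lemma po_monomial {m : ℕ} (a : A) : PO m (fun t : ℂ => t ^ m • a) := by
  refine ⟨m + 1, fun k => if k = m then a else 0,
    fun k hk => by simp [Nat.ne_of_lt hk], fun k hk => by
      have : k ≠ m := by omega
      simp [this], fun t => ?_⟩
  show t ^ m • a = _
  rw [Finset.sum_congr rfl (fun k _ => by
    show t ^ k • (if k = m then a else 0) = if k = m then t ^ k • a else 0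
    split <;> simp)]
  rw [Finset.sum_ite_eq' (Finset.range (m + 1)) m (fun k => t ^ k • a)]
  simp

lemma po_coeffs_zero {N : ℕ} {v : ℕ → A}
    (h : ∀ t : ℂ, ∑ k ∈ range N, t ^ k • v k = 0) : ∀ k, k < N → v k = 0 := by
  intro k hk
  rw [← Module.forall_dual_apply_eq_zero_iff ℂ]
  intro φ
  have hp : ∀ t : ℂ, (∑ j ∈ range N, Polynomial.C (φ (v j)) * Polynomial.X ^ j).eval t = 0 := by
    intro t
    have h2 := congrArg φ (h t)
    rw [map_sum] at h2
    simp only [map_smul, smul_eq_mul] at h2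
    rw [Polynomial.eval_finset_sum]
    rw [Finset.sum_congr rfl (fun j _ => by
      rw [Polynomial.eval_mul, Polynomial.eval_C, Polynomial.eval_pow, Polynomial.eval_X,
        mul_comm])]
    rw [map_zero] at h2; exact h2
  have hzero : (∑ j ∈ range N, Polynomial.C (φ (v j)) * Polynomial.X ^ j) = 0 :=
    Polynomial.funext (fun r => by rw [hp r, Polynomial.eval_zero])
  have h3 := congrArg (fun p => Polynomial.coeff p k) hzero
  simp only [Polynomial.finset_sum_coeff, Polynomial.coeff_C_mul, Polynomial.coeff_X_pow,
    Polynomial.coeff_zero, mul_ite, mul_one, mul_zero] at h3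
  rwa [Finset.sum_ite_eq (range N) k (fun j => φ (v j)), if_pos (mem_range.2 hk)] at h3

end PO

section POmul
variable {A : Type*} [AddCommGroup A] [Module ℂ A] {d : ℕ}

lemma po_mul (hd : 0 < d) (μ : MultilinearMap ℂ (fun _ : Fin d => A) A)
    (g : Fin d → ℂ → A) (m : Fin d → ℕ) (h : ∀ i, PO (m i) (g i)) :
    PO (∑ i, m i) (fun t => μ (fun i => g i t)) := by
  have : Nonempty (Fin d) := ⟨⟨0, hd⟩⟩
  choose N v h1 h2 h3 using h
  refine ⟨∑ i, N i,
    fun k => ∑ r ∈ (Fintype.piFinset (fun i => range (N i))).filter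
      (fun r => ∑ i, r i = k), μ (fun i => v i (r i)), ?_, ?_, ?_⟩
  · -- low coefficients vanish
    intro k hk
    refine Finset.sum_eq_zero (fun r hr => ?_)
    obtain ⟨_, hrk⟩ := Finset.mem_filter.1 hr
    by_contra hne
    have hall : ∀ i, m i ≤ r i := by
      intro i
      by_contra hlt
      push_neg at hlt
      exact hne (μ.map_coord_zero i (h1 i (r i) hlt))
    have : (∑ i, m i) ≤ ∑ i, r i := Finset.sum_le_sum (fun i _ => hall i)
    omega
  · -- high coefficients vanish
    intro k hk
    refine Finset.sum_eq_zero (fun r hr => ?_)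
    obtain ⟨hrm, hrk⟩ := Finset.mem_filter.1 hr
    rw [Fintype.mem_piFinset] at hrm
    have : (∑ i, r i) < ∑ i, N i :=
      Finset.sum_lt_sum_of_nonempty Finset.univ_nonempty (fun i _ => mem_range.1 (hrm i))
    omega
  · -- the representation
    intro t
    have e1 : μ (fun i => g i t) =
        ∑ r ∈ Fintype.piFinset (fun i => range (N i)),
          t ^ (∑ i, r i) • μ (fun i => v i (r i)) := by
      rw [show (fun i => g i t) = fun i => ∑ k ∈ range (N i), t ^ k • v i k from
        funext (fun i => h3 i t)]
      rw [μ.map_sum_finset (fun i k => t ^ k • v i k) (fun i => range (N i))]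
      refine Finset.sum_congr rfl (fun r _ => ?_)
      rw [show (fun i => t ^ r i • v i (r i)) = fun i => t ^ r i • (fun j => v j (r j)) i from rfl]
      rw [μ.map_smul_univ (fun i => t ^ r i) (fun i => v i (r i))]
      rw [Finset.prod_pow_eq_pow_sum]
    show μ (fun i => g i t) = _
    rw [e1]
    have hmaps : ∀ r ∈ Fintype.piFinset (fun i => range (N i)),
        (∑ i, r i) ∈ range (∑ i, N i) := by
      intro r hr
      rw [Fintype.mem_piFinset] at hr
      exact mem_range.2 (Finset.sum_lt_sum_of_nonempty Finset.univ_nonempty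
        (fun i _ => mem_range.1 (hr i)))
    rw [← Finset.sum_fiberwise_of_maps_to hmaps
      (fun r => t ^ (∑ i, r i) • μ (fun i => v i (r i)))]
    refine Finset.sum_congr rfl (fun k _ => ?_)
    rw [Finset.smul_sum]
    refine Finset.sum_congr rfl (fun r hr => ?_)
    rw [(Finset.mem_filter.1 hr).2]

/-- If `f` has all orders, it is zero. -/
lemma po_all_zero {f : ℂ → A} (h : ∀ m, PO m f) : ∀ t, f t = 0 := by
  obtain ⟨N, v, _, h2, h3⟩ := h 0
  obtain ⟨N', w, g1, g2, g3⟩ := h N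
  have key : ∀ t : ℂ, ∑ k ∈ range (max N N'), t ^ k • (v k - w k) = 0 := by
    intro t
    have : ∑ k ∈ range (max N N'), t ^ k • (v k - w k)
        = ∑ k ∈ range (max N N'), t ^ k • v k - ∑ k ∈ range (max N N'), t ^ k • w k := by
      rw [← Finset.sum_sub_distrib]
      exact Finset.sum_congr rfl (fun k _ => by rw [smul_sub])
    rw [this, ← sum_range_ext (le_max_left N N') h2 t,
      ← sum_range_ext (le_max_right N N') g2 t, ← h3 t, ← g3 t, sub_self]
  have hvw : ∀ k, k < max N N' → v k = w k := by
    intro k hk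
    have := po_coeffs_zero key k hk
    rwa [sub_eq_zero] at this
  have hv : ∀ k, v k = 0 := by
    intro k
    rcases lt_or_ge k N with hk | hk
    · rw [hvw k (lt_of_lt_of_le hk (le_max_left _ _)), g1 k hk]
    · exact h2 k hk
  intro t
  rw [h3 t]
  exact Finset.sum_eq_zero (fun k _ => by rw [hv k, smul_zero])

/-- Extract: if `t • y` has order 2, then `y = 0`. -/
lemma po_linear_zero {y : A} (h : PO 2 (fun t : ℂ => t • y)) : y = 0 := by
  obtain ⟨N, v, h1, h2, h3⟩ := h
  set M := max N 2 with hM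
  have key : ∀ t : ℂ, ∑ k ∈ range M, t ^ k • ((if k = 1 then y else 0) - v k) = 0 := by
    intro t
    have e1 : ∑ k ∈ range M, t ^ k • (if k = 1 then y else (0:A)) = t • y := by
      rw [Finset.sum_congr rfl (fun k _ => by
        show t ^ k • (if k = 1 then y else 0) = if k = 1 then t ^ k • y else 0
        split <;> simp)]
      rw [Finset.sum_ite_eq' (range M) 1 (fun k => t ^ k • y),
        if_pos (mem_range.2 (by omega)), pow_one]
    have : ∑ k ∈ range M, t ^ k • ((if k = 1 then y else 0) - v k)
        = ∑ k ∈ range M, t ^ k • (if k = 1 then y else (0:A))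
          - ∑ k ∈ range M, t ^ k • v k := by
      rw [← Finset.sum_sub_distrib]
      exact Finset.sum_congr rfl (fun k _ => by rw [smul_sub])
    rw [this, e1, ← sum_range_ext (le_max_left N 2) h2 t, ← h3 t, sub_self]
  have := po_coeffs_zero key 1 (by omega)
  rw [if_pos rfl] at this
  rw [← sub_eq_zero]
  rw [h1 1 (by omega)] at this
  simpa using this

end POmul
section Alg
variable {A : Type*} [AddCommGroup A] [Module ℂ A]
variable {d : ℕ} (hd : 2 ≤ d) (μ : MultilinearMap ℂ (fun _ : Fin d => A) A)
variable (T : ℕ → A → A) {P : ℕ} (hP2 : 2 ≤ P)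

/-- Step A: the fundamental identity `μ(G z, ..., G z) = G z - z`. -/
lemma key_sum (hdd : 2 ≤ d) (hPP : 2 ≤ P)
    (hT1 : ∀ x, T 1 x = x)
    (hTq : ∀ q, 1 < q → ∀ x, T q x =
      ∑ c ∈ (Finset.Nat.antidiagonalTuple d q).filter (fun c => ∀ i, c i ≠ 0),
        μ (fun i => T (c i) x))
    (hPnil : ∀ q, P ≤ q → ∀ x : A, T q x = 0) (z : A) :
    μ (fun _ => ∑ q ∈ Icc 1 (P-1), T q z) = (∑ q ∈ Icc 1 (P-1), T q z) - z := by
  classical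
  set f : (Fin d → ℕ) → A := fun c => μ (fun i => T (c i) z) with hf
  set K := d * P with hK
  have hd0 : 0 < d := by omega
  have hd2 : 2 ≤ d := hdd
  have hP2' : 2 ≤ P := hPP
  have hPK : P ≤ K := Nat.le_mul_of_pos_left P hd0
  have hvan : ∀ c : Fin d → ℕ, ∀ i, P ≤ c i → f c = 0 := fun c i hi =>
    μ.map_coord_zero i (hPnil (c i) hi z)
  set D : ℕ → Finset (Fin d → ℕ) :=
    fun q => (Finset.Nat.antidiagonalTuple d q).filter (fun c => ∀ i, c i ≠ 0) with hD
  have hmemD : ∀ q c, c ∈ D q ↔ (∑ i, c i = q ∧ ∀ i, c i ≠ 0) := by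
    intro q c
    rw [hD, Finset.mem_filter, Finset.Nat.mem_antidiagonalTuple]
  -- Step 1
  have step1 : μ (fun _ => ∑ q ∈ Icc 1 (P-1), T q z)
      = ∑ c ∈ Fintype.piFinset (fun _ : Fin d => Icc 1 (P-1)), f c := by
    exact μ.map_sum_finset (fun _ q => T q z) (fun _ => Icc 1 (P-1))
  -- Step 2
  have step2 : ∑ c ∈ Fintype.piFinset (fun _ : Fin d => Icc 1 (P-1)), f c
      = ∑ c ∈ Fintype.piFinset (fun _ : Fin d => Icc 1 K), f c := by
    refine Finset.sum_subset (fun c hc => ?_) (fun c hc hnc => ?_)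
    · rw [Fintype.mem_piFinset] at hc ⊢
      intro i
      obtain ⟨h1, h2⟩ := Finset.mem_Icc.1 (hc i)
      exact Finset.mem_Icc.2 ⟨h1, by omega⟩
    · rw [Fintype.mem_piFinset] at hc hnc
      push_neg at hnc
      obtain ⟨i, hi⟩ := hnc
      obtain ⟨h1, _⟩ := Finset.mem_Icc.1 (hc i)
      rw [Finset.mem_Icc] at hi
      push_neg at hi
      exact hvan c i (by omega)
  -- Step 3
  have hdisj : (↑(Icc 2 K) : Set ℕ).PairwiseDisjoint D := by
    intro q _ q' _ hne
    refine Finset.disjoint_left.2 (fun c hc hc' => hne ?_)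
    rw [hmemD] at hc hc'
    omega
  have step3 : ∑ c ∈ Fintype.piFinset (fun _ : Fin d => Icc 1 K), f c
      = ∑ q ∈ Icc 2 K, ∑ c ∈ D q, f c := by
    rw [← Finset.sum_biUnion hdisj]
    refine (Finset.sum_subset (fun c hc => ?_) (fun c hc hnc => ?_)).symm
    · rw [Finset.mem_biUnion] at hc
      obtain ⟨q, hq, hcq⟩ := hc
      rw [hmemD] at hcq
      obtain ⟨hsum, hne⟩ := hcq
      rw [Fintype.mem_piFinset]
      intro i
      refine Finset.mem_Icc.2 ⟨Nat.one_le_iff_ne_zero.2 (hne i), ?_⟩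
      calc c i ≤ ∑ j, c j := Finset.single_le_sum (fun j _ => Nat.zero_le _) (mem_univ i)
        _ = q := hsum
        _ ≤ K := (Finset.mem_Icc.1 hq).2
    · rw [Fintype.mem_piFinset] at hc
      by_contra hne0
      have hc1 : ∀ i, 1 ≤ c i := fun i => (Finset.mem_Icc.1 (hc i)).1
      have hsumge : d ≤ ∑ i, c i := by
        calc d = ∑ _i : Fin d, 1 := by simp
          _ ≤ ∑ i, c i := Finset.sum_le_sum (fun i _ => hc1 i)
      by_cases hbig : ∑ i, c i ≤ K
      · refine hnc (Finset.mem_biUnion.2 ⟨∑ i, c i, Finset.mem_Icc.2 ⟨by omega, hbig⟩, ?_⟩)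
        rw [hmemD]
        exact ⟨rfl, fun i => by have := hc1 i; omega⟩
      · push_neg at hbig
        have : ∃ i, P ≤ c i := by
          by_contra hall
          push_neg at hall
          have : ∑ i, c i ≤ ∑ _i : Fin d, P :=
            Finset.sum_le_sum (fun i _ => by have := hall i; omega)
          simp only [Finset.sum_const, card_univ, Fintype.card_fin, smul_eq_mul] at this
          omega
        obtain ⟨i, hi⟩ := this
        exact hne0 (hvan c i hi)
  -- Step 4
  have step4 : ∑ q ∈ Icc 2 K, ∑ c ∈ D q, f c = ∑ q ∈ Icc 2 K, T q z :=
    Finset.sum_congr rfl (fun q hq => by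
      rw [hTq q (by rw [Finset.mem_Icc] at hq; omega) z])
  -- Step 5
  have step5 : ∑ q ∈ Icc 2 K, T q z = ∑ q ∈ Icc 2 (P-1), T q z := by
    refine (Finset.sum_subset (fun q hq => ?_) (fun q hq hnq => ?_)).symm
    · rw [Finset.mem_Icc] at hq ⊢
      omega
    · rw [Finset.mem_Icc] at hq hnq
      push_neg at hnq
      exact hPnil q (by omega) z
  -- Step 6
  have step6 : ∑ q ∈ Icc 1 (P-1), T q z = z + ∑ q ∈ Icc 2 (P-1), T q z := by
    rw [Finset.Icc_eq_cons_Ioc (by omega : 1 ≤ P - 1), Finset.sum_cons, hT1,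
      ← Finset.Icc_add_one_left_eq_Ioc]
    rfl
  rw [step1, step2, step3, step4, step5, step6]
  abel

end Alg

section Alg2
variable {A : Type*} [AddCommGroup A] [Module ℂ A]
variable {d : ℕ} (μ : MultilinearMap ℂ (fun _ : Fin d => A) A)
variable (T : ℕ → A → A)

lemma po_const {A : Type*} [AddCommGroup A] [Module ℂ A] (a : A) :
    PO 0 (fun _ : ℂ => a) :=
  po_congr (fun t => by simp) (po_monomial (m := 0) a)

/-- each part of an admissible composition is `< q`. -/
lemma parts_lt (hdd : 2 ≤ d) {q : ℕ} {c : Fin d → ℕ}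
    (hsum : ∑ i, c i = q) (hne : ∀ i, c i ≠ 0) (i : Fin d) : c i < q := by
  have hi1 : (1 : ℕ) ≤ c i := Nat.one_le_iff_ne_zero.2 (hne i)
  set j : Fin d := if i = ⟨0, by omega⟩ then ⟨1, by omega⟩ else ⟨0, by omega⟩ with hj
  have hji : j ≠ i := by
    rcases eq_or_ne i ⟨0, by omega⟩ with h | h
    · rw [hj, if_pos h, h]
      intro hc
      exact absurd (congrArg Fin.val hc) (by simp)
    · rw [hj, if_neg h]
      exact fun hc => h hc.symm
  have hj1 : 1 ≤ c j := Nat.one_le_iff_ne_zero.2 (hne j)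
  have : c i + c j ≤ ∑ k, c k := by
    rw [← Finset.add_sum_erase Finset.univ c (Finset.mem_univ i)]
    have : c j ≤ ∑ k ∈ Finset.univ.erase i, c k :=
      Finset.single_le_sum (fun k _ => Nat.zero_le _)
        (Finset.mem_erase.2 ⟨hji, Finset.mem_univ j⟩)
    omega
  omega

/-- composition with a `PO 1` function preserves `PO 1`. -/
lemma po_T (hdd : 2 ≤ d)
    (hT1 : ∀ x, T 1 x = x)
    (hTq : ∀ q, 1 < q → ∀ x, T q x =
      ∑ c ∈ (Finset.Nat.antidiagonalTuple d q).filter (fun c => ∀ i, c i ≠ 0),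
        μ (fun i => T (c i) x)) :
    ∀ q, 1 ≤ q → ∀ f : ℂ → A, PO 1 f → PO 1 (fun t => T q (f t)) := by
  intro q
  induction q using Nat.strong_induction_on with
  | _ q ih =>
    intro hq f hf
    rcases eq_or_lt_of_le hq with h1 | h1
    · exact po_congr (fun t => by rw [← h1, hT1]) hf
    · refine po_congr (fun t => (hTq q h1 (f t)).symm) ?_
      refine po_sum _ _ (fun c hc => ?_)
      obtain ⟨hcs, hcn⟩ := Finset.mem_filter.1 hc
      rw [Finset.Nat.mem_antidiagonalTuple] at hcs
      have hparts : ∀ i, c i < q := parts_lt hdd hcs hcn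
      have base : ∀ i : Fin d, PO 1 (fun t => T (c i) (f t)) := fun i =>
        ih (c i) (hparts i) (Nat.one_le_iff_ne_zero.2 (hcn i)) f hf
      have := po_mul (by omega) μ (fun i t => T (c i) (f t)) (fun _ => 1) base
      simp only [Finset.sum_const, Finset.card_univ, Fintype.card_fin, smul_eq_mul,
        mul_one] at this
      exact po_mono (by omega) this

/-- difference along a `PO 2` perturbation is `PO 2`. -/
lemma po_T2 (hdd : 2 ≤ d)
    (hT1 : ∀ x, T 1 x = x)
    (hTq : ∀ q, 1 < q → ∀ x, T q x =
      ∑ c ∈ (Finset.Nat.antidiagonalTuple d q).filter (fun c => ∀ i, c i ≠ 0),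
        μ (fun i => T (c i) x))
    (w : A) (r : ℂ → A) (hr : PO 2 r) :
    ∀ q, 1 ≤ q → PO 2 (fun t => T q (w + r t) - T q w) := by
  classical
  intro q
  induction q using Nat.strong_induction_on with
  | _ q ih =>
    intro hq
    rcases eq_or_lt_of_le hq with h1 | h1
    · refine po_congr (fun t => ?_) hr
      rw [← h1, hT1, hT1, add_sub_cancel_left]
    · have key : ∀ t : ℂ, T q (w + r t) - T q w =
          ∑ c ∈ (Finset.Nat.antidiagonalTuple d q).filter (fun c => ∀ i, c i ≠ 0),
            ∑ S ∈ (Finset.univ : Finset (Finset (Fin d))).erase ∅,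
              μ (S.piecewise (fun i => T (c i) (w + r t) - T (c i) w)
                (fun i => T (c i) w)) := by
        intro t
        rw [hTq q h1 (w + r t), hTq q h1 w, ← Finset.sum_sub_distrib]
        refine Finset.sum_congr rfl (fun c hc => ?_)
        have e1 : (fun i => T (c i) (w + r t)) =
            (fun i => T (c i) (w + r t) - T (c i) w) + (fun i => T (c i) w) := by
          funext i
          simp
        rw [e1, μ.map_add_univ, ← Finset.add_sum_erase _ _
          (Finset.mem_univ (∅ : Finset (Fin d)))]
        rw [Finset.piecewise_empty]
        abel
      refine po_congr (fun t => (key t).symm) ?_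
      refine po_sum _ _ (fun c hc => ?_)
      refine po_sum _ _ (fun S hS => ?_)
      obtain ⟨hcs, hcn⟩ := Finset.mem_filter.1 hc
      rw [Finset.Nat.mem_antidiagonalTuple] at hcs
      have hparts : ∀ i, c i < q := parts_lt hdd hcs hcn
      have hpo : ∀ i : Fin d, PO (if i ∈ S then 2 else 0)
          (fun t => if i ∈ S then T (c i) (w + r t) - T (c i) w else T (c i) w) := by
        intro i
        by_cases hiS : i ∈ S
        · simpa [hiS] using ih (c i) (hparts i) (Nat.one_le_iff_ne_zero.2 (hcn i))
        · simpa [hiS] using po_const (T (c i) w)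
      have hmul := po_mul (by omega) μ
        (fun i t => if i ∈ S then T (c i) (w + r t) - T (c i) w else T (c i) w)
        (fun i => if i ∈ S then 2 else 0) hpo
      have hcongr : ∀ t : ℂ,
          μ (fun i => if i ∈ S then T (c i) (w + r t) - T (c i) w else T (c i) w)
          = μ (S.piecewise (fun i => T (c i) (w + r t) - T (c i) w)
              (fun i => T (c i) w)) := by
        intro t
        refine congrArg _ (funext fun i => ?_)
        by_cases h : i ∈ S <;>
          simp [Finset.piecewise_eq_of_mem, Finset.piecewise_eq_of_notMem, h]
      obtain ⟨i0, hi0⟩ := Finset.nonempty_iff_ne_empty.2 (Finset.mem_erase.1 hS).1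
      have hge : 2 ≤ ∑ i, if i ∈ S then 2 else 0 := by
        have : (if i0 ∈ S then 2 else 0) ≤ ∑ i, if i ∈ S then 2 else 0 :=
          Finset.single_le_sum (f := fun i => if i ∈ S then 2 else 0)
            (fun i _ => by positivity) (Finset.mem_univ i0)
        rwa [if_pos hi0] at this
      exact po_congr hcongr (po_mono hge hmul)

end Alg2

section StepB
variable {A : Type*} [AddCommGroup A] [Module ℂ A]
variable {d : ℕ} (μ : MultilinearMap ℂ (fun _ : Fin d => A) A)
variable (T : ℕ → A → A) {P : ℕ}

/-- Step B: `G` is also a left inverse of `F`. -/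
lemma GFid (hdd : 2 ≤ d) (hPP : 2 ≤ P)
    (hT1 : ∀ x, T 1 x = x)
    (hTq : ∀ q, 1 < q → ∀ x, T q x =
      ∑ c ∈ (Finset.Nat.antidiagonalTuple d q).filter (fun c => ∀ i, c i ≠ 0),
        μ (fun i => T (c i) x))
    (hPnil : ∀ q, P ≤ q → ∀ x : A, T q x = 0) (z : A) :
    ∑ q ∈ Icc 1 (P-1), T q (z - μ (fun _ => z)) = z := by
  classical
  have hd0 : 0 < d := by omega
  set Fz : ℂ → A := fun t => t • z - μ (fun _ => t • z) with hFz
  set u : ℂ → A := fun t => ∑ q ∈ Icc 1 (P-1), T q (Fz t) with hu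
  set e : ℂ → A := fun t => u t - t • z with he
  -- Fz is PO 1
  have hFzeq : ∀ t : ℂ, Fz t = t ^ 1 • z - t ^ d • μ (fun _ => z) := by
    intro t
    show t • z - μ (fun _ : Fin d => t • z) = t ^ 1 • z - t ^ d • μ (fun _ => z)
    rw [pow_one]
    congr 1
    rw [show (fun _ : Fin d => t • z) = fun i => t • (fun _ : Fin d => z) i from rfl,
      μ.map_smul_univ]
    simp
  have hFzPO : PO 1 Fz :=
    po_congr (fun t => (hFzeq t).symm)
      (po_sub (po_monomial z) (po_mono (by omega) (po_monomial (μ (fun _ => z)))))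
  have huPO : PO 1 u :=
    po_sum _ _ (fun q hq => po_T μ T hdd hT1 hTq q (Finset.mem_Icc.1 hq).1 Fz hFzPO)
  have hePO1 : PO 1 e :=
    po_sub huPO (po_congr (fun t => by rw [pow_one]) (po_monomial z))
  -- the self-reproducing identity for e
  have hiter : ∀ t : ℂ, e t = ∑ S ∈ (Finset.univ : Finset (Finset (Fin d))).erase ∅,
      μ (S.piecewise (fun _ => e t) (fun _ => t • z)) := by
    intro t
    have hks' : μ (fun _ => u t) = u t - Fz t :=
      key_sum (T := T) (P := P) μ hdd hPP hT1 hTq hPnil (Fz t)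
    have he1 : e t = μ (fun _ => u t) - μ (fun _ => t • z) := by
      show u t - t • z = _
      rw [hks']
      have h5 : Fz t = t • z - μ (fun _ => t • z) := rfl
      rw [h5]
      abel
    have he2 : (fun _ : Fin d => u t) = (fun _ : Fin d => e t) + (fun _ : Fin d => t • z) := by
      funext i
      show u t = (u t - t • z) + t • z
      abel
    conv_lhs => rw [he1, he2, μ.map_add_univ]
    rw [← Finset.add_sum_erase _
        (fun S => μ (S.piecewise (fun _ => e t) (fun _ => t • z)))
        (Finset.mem_univ (∅ : Finset (Fin d))), Finset.piecewise_empty]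
    exact add_sub_cancel_left _ _
  -- bootstrapping the order of e
  have hstep : ∀ m, 1 ≤ m → PO m e → PO (m + 1) e := by
    intro m hm hPOm
    refine po_congr (fun t => (hiter t).symm) ?_
    refine po_sum _ _ (fun S hS => ?_)
    obtain ⟨i0, hi0⟩ := Finset.nonempty_iff_ne_empty.2 (Finset.mem_erase.1 hS).1
    have hpo : ∀ i : Fin d, PO (if i ∈ S then m else 1)
        (fun t => if i ∈ S then e t else t • z) := by
      intro i
      by_cases hiS : i ∈ S
      · simpa [hiS] using hPOm
      · simpa [hiS] using po_congr (fun t : ℂ => by rw [pow_one]) (po_monomial z)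
    have hmul := po_mul hd0 μ (fun i t => if i ∈ S then e t else t • z)
      (fun i => if i ∈ S then m else 1) hpo
    have hcongr : ∀ t : ℂ, μ (fun i => if i ∈ S then e t else t • z)
        = μ (S.piecewise (fun _ => e t) (fun _ => t • z)) := by
      intro t
      refine congrArg _ (funext fun i => ?_)
      by_cases h : i ∈ S <;>
        simp [Finset.piecewise_eq_of_mem, Finset.piecewise_eq_of_notMem, h]
    have hge : m + 1 ≤ ∑ i, if i ∈ S then m else 1 := by
      have h1 : (if i0 ∈ S then m else 1) + ∑ i ∈ Finset.univ.erase i0,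
          (if i ∈ S then m else 1) = ∑ i, if i ∈ S then m else 1 :=
        Finset.add_sum_erase Finset.univ (fun i => if i ∈ S then m else 1)
          (Finset.mem_univ i0)
      have h2 : ∑ i ∈ Finset.univ.erase i0, (1:ℕ) ≤ ∑ i ∈ Finset.univ.erase i0,
          (if i ∈ S then m else 1) :=
        Finset.sum_le_sum (fun i _ => by split <;> omega)
      have h3 : ∑ i ∈ Finset.univ.erase i0, (1:ℕ) = d - 1 := by
        rw [Finset.sum_const, smul_eq_mul, mul_one, Finset.card_erase_of_mem (Finset.mem_univ i0),
          Finset.card_univ, Fintype.card_fin]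
      rw [if_pos hi0] at h1
      omega
    exact po_congr hcongr (po_mono hge hmul)
  have hall : ∀ m, PO m e := by
    have haux : ∀ n, PO (n + 1) e := by
      intro n
      induction n with
      | zero => exact hePO1
      | succ n ihn => exact hstep (n + 1) (by omega) ihn
    intro m
    exact po_mono (Nat.le_succ m) (haux m)
  have hzero := po_all_zero hall 1
  have hFz1 : Fz 1 = z - μ (fun _ => z) := by
    show (1:ℂ) • z - μ (fun _ => (1:ℂ) • z) = z - μ (fun _ => z)
    rw [one_smul]
  have hu1 : u 1 = z := by
    have hz1 : u 1 - (1:ℂ) • z = 0 := hzero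
    rw [sub_eq_zero, one_smul] at hz1
    exact hz1
  calc ∑ q ∈ Icc 1 (P-1), T q (z - μ (fun _ => z))
      = ∑ q ∈ Icc 1 (P-1), T q (Fz 1) := by rw [hFz1]
    _ = u 1 := rfl
    _ = z := hu1

end StepB

section StepC
variable {A : Type*} [AddCommGroup A] [Module ℂ A]
variable {d : ℕ} (μ : MultilinearMap ℂ (fun _ : Fin d => A) A)
variable (T : ℕ → A → A) {P : ℕ}

/-- Step C: a vector fixed by `d•Ad_x` is zero. -/
lemma engel_vector (hdd : 2 ≤ d) (hPP : 2 ≤ P)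
    (hsymm : ∀ (σ : Equiv.Perm (Fin d)) (v : Fin d → A), μ (v ∘ σ) = μ v)
    (hT1 : ∀ x, T 1 x = x)
    (hTq : ∀ q, 1 < q → ∀ x, T q x =
      ∑ c ∈ (Finset.Nat.antidiagonalTuple d q).filter (fun c => ∀ i, c i ≠ 0),
        μ (fun i => T (c i) x))
    (hPnil : ∀ q, P ≤ q → ∀ x : A, T q x = 0) (x y : A)
    (hy : y = (d:ℂ) • μ (Function.update (fun _ => x) (⟨0, by omega⟩ : Fin d) y)) :
    y = 0 := by
  classical
  set i0 : Fin d := ⟨0, by omega⟩ with hi0def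
  set Ad : A := μ (Function.update (fun _ : Fin d => x) i0 y) with hAd
  set MS : Finset (Fin d) → A := fun S => μ (S.piecewise (fun _ => y) (fun _ => x)) with hMS
  set w : A := x - μ (fun _ => x) with hw
  -- expansion of μ((x+ty)^d)
  have hexp : ∀ t : ℂ, μ (fun _ : Fin d => x + t • y)
      = ∑ S : Finset (Fin d), t ^ S.card • MS S := by
    intro t
    have h1 : (fun _ : Fin d => x + t • y) = (fun _ : Fin d => t • y) + (fun _ : Fin d => x) := by
      funext i
      show x + t • y = t • y + x
      abel
    rw [h1, μ.map_add_univ]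
    refine Finset.sum_congr rfl (fun S _ => ?_)
    have h2 : S.piecewise (fun _ : Fin d => t • y) (fun _ => x)
        = fun i => (if i ∈ S then t else 1) • (S.piecewise (fun _ : Fin d => y) (fun _ => x)) i := by
      funext i
      by_cases h : i ∈ S <;>
        simp [Finset.piecewise_eq_of_mem, Finset.piecewise_eq_of_notMem, h]
    rw [h2, μ.map_smul_univ, Finset.prod_ite_mem, Finset.univ_inter, Finset.prod_const]
  -- singleton terms
  have hsingle : ∀ i : Fin d, MS {i} = Ad := by
    intro i
    have h1 : ({i} : Finset (Fin d)).piecewise (fun _ : Fin d => y) (fun _ => x)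
        = (Function.update (fun _ : Fin d => x) i0 y) ∘ (Equiv.swap i0 i) := by
      funext j
      have hswap : ((Equiv.swap i0 i) j = i0) ↔ (j = i) := by
        rw [Equiv.apply_eq_iff_eq_symm_apply, Equiv.symm_swap, Equiv.swap_apply_left]
      show ({i} : Finset (Fin d)).piecewise (fun _ => y) (fun _ => x) j
          = Function.update (fun _ : Fin d => x) i0 y ((Equiv.swap i0 i) j)
      rw [Function.update_apply]
      by_cases h : j = i
      · rw [if_pos (hswap.2 h), Finset.piecewise_eq_of_mem _ _ _ (by simp [h])]
      · rw [if_neg (fun hc => h (hswap.1 hc)),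
          Finset.piecewise_eq_of_notMem _ _ _ (by simp [h])]
    rw [hMS]
    simp only []
    rw [h1, hsymm]
  -- partition of the expansion
  have hsplit : ∀ t : ℂ, ∑ S : Finset (Fin d), t ^ S.card • MS S
      = μ (fun _ : Fin d => x) + t • ((d : ℕ) • Ad)
        + ∑ S ∈ Finset.univ.filter (fun S : Finset (Fin d) => 2 ≤ S.card),
            t ^ S.card • MS S := by
    intro t
    have hp1 : ∑ S : Finset (Fin d), t ^ S.card • MS S
        = (∑ S ∈ Finset.univ.filter (fun S : Finset (Fin d) => S.card ≤ 1),
            t ^ S.card • MS S)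
          + ∑ S ∈ Finset.univ.filter (fun S : Finset (Fin d) => ¬ S.card ≤ 1),
            t ^ S.card • MS S :=
      (Finset.sum_filter_add_sum_filter_not _ _ _).symm
    have hp2 : Finset.univ.filter (fun S : Finset (Fin d) => ¬ S.card ≤ 1)
        = Finset.univ.filter (fun S : Finset (Fin d) => 2 ≤ S.card) := by
      refine Finset.filter_congr (fun S _ => ?_)
      constructor <;> intro h <;> omega
    have hp3 : ∑ S ∈ Finset.univ.filter (fun S : Finset (Fin d) => S.card ≤ 1),
          t ^ S.card • MS S
        = (∑ S ∈ Finset.univ.filter (fun S : Finset (Fin d) => S.card = 0),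
            t ^ S.card • MS S)
          + ∑ S ∈ Finset.univ.filter (fun S : Finset (Fin d) => S.card = 1),
            t ^ S.card • MS S := by
      rw [← Finset.sum_filter_add_sum_filter_not
        (Finset.univ.filter (fun S : Finset (Fin d) => S.card ≤ 1))
        (fun S => S.card = 0) (fun S => t ^ S.card • MS S),
        Finset.filter_filter, Finset.filter_filter]
      congr 1
      · exact Finset.sum_congr (Finset.filter_congr (fun S _ => by constructor <;> intro h <;> omega)) (fun _ _ => rfl)
      · exact Finset.sum_congr (Finset.filter_congr (fun S _ => by constructor <;> intro h <;> omega)) (fun _ _ => rfl)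
    have hp4 : Finset.univ.filter (fun S : Finset (Fin d) => S.card = 0)
        = {(∅ : Finset (Fin d))} := by
      ext S
      simp [Finset.card_eq_zero]
    have hp5 : Finset.univ.filter (fun S : Finset (Fin d) => S.card = 1)
        = Finset.univ.image (fun i : Fin d => ({i} : Finset (Fin d))) := by
      ext S
      simp only [Finset.mem_filter, Finset.mem_univ, true_and, Finset.mem_image,
        Finset.card_eq_one]
      tauto
    have hp6 : ∑ S ∈ Finset.univ.filter (fun S : Finset (Fin d) => S.card = 1),
        t ^ S.card • MS S = t • ((d : ℕ) • Ad) := by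
      rw [hp5, Finset.sum_image (fun a _ b _ h => Finset.singleton_injective h)]
      have : ∀ i : Fin d, t ^ (({i} : Finset (Fin d)).card) • MS {i} = t • Ad := by
        intro i
        rw [Finset.card_singleton, pow_one, hsingle i]
      rw [Finset.sum_congr rfl (fun i _ => this i), Finset.sum_const, Finset.card_univ,
        Fintype.card_fin, smul_comm]
    rw [hp1, hp2, hp3, hp4, hp6, Finset.sum_singleton]
    congr 2
    rw [hMS]
    simp only []
    rw [Finset.piecewise_empty, Finset.card_empty, pow_zero, one_smul]
  -- the perturbation r
  set r : ℂ → A := fun t => (x + t • y - μ (fun _ => x + t • y)) - w with hrdef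
  have hr : ∀ t : ℂ, r t = - ∑ S ∈ Finset.univ.filter
      (fun S : Finset (Fin d) => 2 ≤ S.card), t ^ S.card • MS S := by
    intro t
    show (x + t • y - μ (fun _ => x + t • y)) - w = _
    rw [hexp t, hsplit t, hw]
    have hyd : t • y = t • ((d : ℕ) • Ad) := by
      rw [hy, hAd]
      congr 1
      rw [Nat.cast_smul_eq_nsmul]
    rw [show x + t • y - (μ (fun _ : Fin d => x) + t • ((d:ℕ) • Ad)
        + ∑ S ∈ Finset.univ.filter (fun S : Finset (Fin d) => 2 ≤ S.card),
            t ^ S.card • MS S) - (x - μ (fun _ : Fin d => x))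
      = t • y - t • ((d:ℕ) • Ad)
        - ∑ S ∈ Finset.univ.filter (fun S : Finset (Fin d) => 2 ≤ S.card),
            t ^ S.card • MS S from by abel]
    rw [← hyd]
    abel
  have hrPO : PO 2 r := by
    refine po_congr (fun t => (hr t).symm) (po_neg ?_)
    refine po_sum _ _ (fun S hS => ?_)
    have h2 : 2 ≤ S.card := (Finset.mem_filter.1 hS).2
    exact po_mono h2 (po_monomial (MS S))
  -- conclude via GFid and PO 2
  have hGF := GFid μ T hdd hPP hT1 hTq hPnil
  have hkey : ∀ t : ℂ, ∑ q ∈ Icc 1 (P-1), (T q (w + r t) - T q w) = t • y := by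
    intro t
    rw [Finset.sum_sub_distrib]
    have h1 : w + r t = (x + t • y) - μ (fun _ => x + t • y) := by
      show w + ((x + t • y - μ (fun _ => x + t • y)) - w) = _
      abel
    have h2 : (w : A) = x - μ (fun _ => x) := hw
    rw [h1, h2, hGF (x + t • y), hGF x, add_sub_cancel_left]
  have hPO2 : PO 2 (fun t : ℂ => t • y) := by
    refine po_congr hkey ?_
    refine po_sum _ _ (fun q hq => ?_)
    exact po_T2 μ T hdd hT1 hTq w r hrPO q (Finset.mem_Icc.1 hq).1
  exact po_linear_zero hPO2

end StepC

/-- Jacobian theorem: a finite-dimensional complex symmetric `d`-linear algebra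
that is Yagzhev nil is Engel. -/
theorem stmt9 {A : Type*} [AddCommGroup A] [Module ℂ A] [FiniteDimensional ℂ A]
    {d : ℕ} (hd : 2 ≤ d) (μ : MultilinearMap ℂ (fun _ : Fin d => A) A)
    (hsymm : ∀ (σ : Equiv.Perm (Fin d)) (v : Fin d → A), μ (v ∘ σ) = μ v)
    (T : ℕ → A → A)
    (hT1 : ∀ x, T 1 x = x)
    (hTq : ∀ q, 1 < q → ∀ x, T q x =
      ∑ c ∈ (Finset.Nat.antidiagonalTuple d q).filter (fun c => ∀ i, c i ≠ 0),
        μ (fun i => T (c i) x))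
    (p : ℕ)
    (hYnil : ∀ q, p ≤ q → ∀ x : A, T q x = 0) :
    ∀ x : A, ∃ n : ℕ, ∀ y : A,
      (fun y => μ (fun i => if (i : ℕ) = 0 then y else x))^[n] y = 0 := by
  classical
  intro x
  set P : ℕ := p + 2 with hP
  have hPP : 2 ≤ P := by omega
  have hPnil : ∀ q, P ≤ q → ∀ z : A, T q z = 0 := fun q hq z => hYnil q (by omega) z
  have hd0 : 0 < d := by omega
  set i0 : Fin d := ⟨0, by omega⟩ with hi0
  set φ : A →ₗ[ℂ] A :=
    { toFun := fun y => μ (Function.update (fun _ : Fin d => x) i0 y),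
      map_add' := fun a b => μ.map_update_add (fun _ : Fin d => x) i0 a b,
      map_smul' := fun c a => μ.map_update_smul (fun _ : Fin d => x) i0 c a } with hφ
  have hφapp : ∀ y : A, φ y = μ (Function.update (fun _ : Fin d => x) i0 y) := fun _ => rfl
  have hfun : ∀ y : A, (fun i : Fin d => if (i : ℕ) = 0 then y else x)
      = Function.update (fun _ : Fin d => x) i0 y := by
    intro y
    funext i
    rw [Function.update_apply]
    rcases eq_or_ne i i0 with h | h
    · rw [if_pos h, if_pos (by rw [h, hi0])]
    · have hvne : (i : ℕ) ≠ 0 := fun hc => h (Fin.ext (by rw [hc, hi0]))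
      rw [if_neg h, if_neg hvne]
  -- all eigenvalues vanish
  have heig : ∀ (lam : ℂ) (y : A), φ y = lam • y → lam ≠ 0 → y = 0 := by
    intro lam y hey hl0
    have hdC : (d : ℂ) ≠ 0 := Nat.cast_ne_zero.2 (by omega)
    obtain ⟨s, hs⟩ := IsAlgClosed.exists_pow_nat_eq (((d:ℂ) * lam)⁻¹)
      (show 0 < d - 1 by omega)
    refine engel_vector μ T hd hPP hsymm hT1 hTq hPnil (s • x) y ?_
    have hupd : Function.update (fun _ : Fin d => s • x) i0 y
        = fun i => (Function.update (fun _ : Fin d => s) i0 (1:ℂ) i)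
            • (Function.update (fun _ : Fin d => x) i0 y i) := by
      funext i
      rcases eq_or_ne i i0 with h | h
      · subst h
        simp
      · simp [Function.update_apply, h]
    have hprod : ∏ i : Fin d, Function.update (fun _ : Fin d => s) i0 (1:ℂ) i
        = s ^ (d-1) := by
      rw [Finset.prod_update_of_mem (Finset.mem_univ i0), Finset.prod_const, one_mul]
      congr 1
      rw [show Finset.univ \ {i0} = Finset.univ.erase i0 from by
          rw [Finset.sdiff_singleton_eq_erase],
        Finset.card_erase_of_mem (Finset.mem_univ i0), Finset.card_univ, Fintype.card_fin]
    calc y = ((d:ℂ) * lam * s ^ (d-1)) • y := by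
          rw [hs, mul_inv_cancel₀ (mul_ne_zero hdC hl0), one_smul]
      _ = (d:ℂ) • μ (Function.update (fun _ => s • x) (⟨0, by omega⟩ : Fin d) y) := by
          rw [show (⟨0, by omega⟩ : Fin d) = i0 from rfl, hupd, μ.map_smul_univ, hprod]
          rw [show μ (Function.update (fun _ : Fin d => x) i0 y) = lam • y from hey]
          rw [smul_smul, smul_smul]
          congr 1
          ring
  -- minimal polynomial is a power of X
  have hmonic : (minpoly ℂ φ).Monic :=
    minpoly.monic (Algebra.IsIntegral.isIntegral (R := ℂ) φ)
  have hroots0 : ∀ lam ∈ (minpoly ℂ φ).roots, lam = 0 := by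
    intro lam hlam
    by_contra h0
    have hroot : (minpoly ℂ φ).IsRoot lam :=
      Polynomial.isRoot_of_mem_roots hlam
    have hev : Module.End.HasEigenvalue φ lam := Module.End.hasEigenvalue_of_isRoot hroot
    obtain ⟨v, hv⟩ := hev.exists_hasEigenvector
    have hvev : φ v = lam • v := Module.End.mem_eigenspace_iff.1 hv.1
    exact hv.2 (heig lam v hvev h0)
  have hsplit : (minpoly ℂ φ).Splits := IsAlgClosed.splits _
  have hmp : minpoly ℂ φ = Polynomial.X ^ ((minpoly ℂ φ).roots.card) := by
    have h1 := hsplit.eq_prod_roots_of_monic hmonic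
    conv_lhs => rw [h1]
    have h2 : Multiset.map (fun a => Polynomial.X - Polynomial.C a) (minpoly ℂ φ).roots
        = Multiset.map (fun _ => (Polynomial.X : Polynomial ℂ)) (minpoly ℂ φ).roots :=
      Multiset.map_congr rfl (fun a ha => by rw [hroots0 a ha, Polynomial.C_0, sub_zero])
    rw [h2, Multiset.map_const', Multiset.prod_replicate]
  have hpow : φ ^ ((minpoly ℂ φ).roots.card) = 0 := by
    have h := minpoly.aeval ℂ φ
    rw [hmp, map_pow, Polynomial.aeval_X] at h
    exact h
  refine ⟨(minpoly ℂ φ).roots.card, fun y => ?_⟩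
  have hiter : ∀ (n : ℕ) (y : A),
      (fun y => μ (fun i => if (i : ℕ) = 0 then y else x))^[n] y = (φ ^ n) y := by
    intro n
    induction n with
    | zero => intro y; simp
    | succ n ihn =>
      intro y
      rw [Function.iterate_succ_apply', ihn y, pow_succ']
      show μ (fun i => if (i:ℕ) = 0 then ((φ^n) y) else x) = (φ * φ^n) y
      rw [hfun ((φ^n) y)]
      rfl
  rw [hiter, hpow]
  simp
end

section
/- Let (A, μ) be a symmetric d-linear algebra over a field of characteristic zero, Yagzhev nil of nilindex p, with g(x) = x − μ(x,...,x) and γ = g^{-1} = Σ_j T_j. Then the partially linearized identity dγ(g(x), dg(x,z)) = z holds for all x, z ∈ A, where dg(x,z) = z − d·μ(x,...,x,z) and dγ(y,t) = Σ_{j=1}^{p-1} (1/(j−1)!)·T_j^{mult}(y,...,y,t), with T_j^{mult} the full multilinearization of T_j. -/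
open Finset

section Poly
set_option linter.unusedSectionVars false
variable {k : Type*} {A : Type*} [Field k] [CharZero k] [AddCommGroup A] [Module k A]

/-- polynomial function `k → A` with valuation ≥ n -/
def PolyGE (f : k → A) (n : ℕ) : Prop :=
  ∃ (Sf : Finset ℕ) (a : ℕ → A), (∀ m ∈ Sf, n ≤ m) ∧ ∀ s : k, f s = ∑ m ∈ Sf, s ^ m • a m

lemma PolyGE.mono {f : k → A} {n m : ℕ} (h : PolyGE f n) (hmn : m ≤ n) : PolyGE f m := by
  obtain ⟨Sf, a, hb, he⟩ := h
  exact ⟨Sf, a, fun x hx => le_trans hmn (hb x hx), he⟩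

lemma PolyGE.congr {f g : k → A} {n : ℕ} (h : PolyGE f n) (hfg : ∀ s, g s = f s) :
    PolyGE g n := by
  obtain ⟨Sf, a, hb, he⟩ := h
  exact ⟨Sf, a, hb, fun s => (hfg s).trans (he s)⟩

lemma polyGE_zero (n : ℕ) : PolyGE (fun _ : k => (0 : A)) n :=
  ⟨∅, fun _ => 0, by simp, by simp⟩

lemma polyGE_monomial (m : ℕ) (c : A) : PolyGE (fun s : k => s ^ m • c) m :=
  ⟨{m}, fun _ => c, by simp, by simp⟩

lemma polyGE_const (c : A) : PolyGE (fun _ : k => c) 0 :=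
  (polyGE_monomial 0 c).congr (by simp)

lemma PolyGE.add {f g : k → A} {n : ℕ} (hf : PolyGE f n) (hg : PolyGE g n) :
    PolyGE (fun s => f s + g s) n := by
  obtain ⟨S1, a1, hb1, he1⟩ := hf
  obtain ⟨S2, a2, hb2, he2⟩ := hg
  refine ⟨S1 ∪ S2,
    fun m => (if m ∈ S1 then a1 m else 0) + (if m ∈ S2 then a2 m else 0), ?_, ?_⟩
  · intro m hm; rcases mem_union.mp hm with h | h
    exacts [hb1 m h, hb2 m h]
  · intro s
    have e1 : ∀ (S : Finset ℕ) (a : ℕ → A), (∑ m ∈ S1 ∪ S2, s ^ m • (if m ∈ S then a m else 0))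
        = ∑ m ∈ (S1 ∪ S2) ∩ S, s ^ m • a m := by
      intro S a
      rw [← Finset.sum_ite_mem]
      exact Finset.sum_congr rfl (fun m _ => by split <;> simp)
    have := e1 S1 a1
    rw [Finset.union_inter_cancel_left] at this
    have h2 := e1 S2 a2
    rw [Finset.union_inter_cancel_right] at h2
    simp only [smul_add, Finset.sum_add_distrib, this, h2, he1 s, he2 s]

lemma PolyGE.neg {f : k → A} {n : ℕ} (hf : PolyGE f n) : PolyGE (fun s => -f s) n := by
  obtain ⟨S1, a1, hb1, he1⟩ := hf
  exact ⟨S1, fun m => -a1 m, hb1, fun s => by simp [he1 s]⟩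

lemma PolyGE.sub {f g : k → A} {n : ℕ} (hf : PolyGE f n) (hg : PolyGE g n) :
    PolyGE (fun s => f s - g s) n :=
  (hf.add hg.neg).congr (fun s => by simp [sub_eq_add_neg])

lemma polyGE_sum {ι : Type*} (t : Finset ι) (f : ι → k → A) (n : ℕ)
    (h : ∀ i ∈ t, PolyGE (f i) n) : PolyGE (fun s => ∑ i ∈ t, f i s) n := by
  classical
  induction t using Finset.cons_induction with
  | empty => exact (polyGE_zero n).congr (by simp)
  | cons i t hi ih =>
    have := (h i (mem_cons_self i t)).add (ih (fun j hj => h j (mem_cons.mpr (Or.inr hj))))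
    exact this.congr (fun s => by rw [Finset.sum_cons])

lemma PolyGE.pow_smul {f : k → A} {n : ℕ} (hf : PolyGE f n) (e : ℕ) :
    PolyGE (fun s => s ^ e • f s) (n + e) := by
  obtain ⟨S1, a1, hb1, he1⟩ := hf
  refine ⟨S1.image (· + e), fun m => a1 (m - e), ?_, ?_⟩
  · intro m hm
    obtain ⟨m', hm', rfl⟩ := Finset.mem_image.mp hm
    exact Nat.add_le_add_right (hb1 m' hm') e
  · intro s
    rw [Finset.sum_image (by intro a _ b _ h; exact Nat.add_right_cancel h)]
    show s ^ e • f s = _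
    rw [he1 s, Finset.smul_sum]
    refine Finset.sum_congr rfl (fun m _ => ?_)
    show s ^ e • s ^ m • a1 m = s ^ (m + e) • a1 (m + e - e)
    have hme : m + e - e = m := by omega
    rw [hme, smul_smul, ← pow_add, Nat.add_comm e m]

lemma polyGE_mu {d : ℕ} (μ : MultilinearMap k (fun _ : Fin d => A) A)
    (f : Fin d → k → A) (n : Fin d → ℕ) (h : ∀ i, PolyGE (f i) (n i)) :
    PolyGE (fun s => μ (fun i => f i s)) (∑ i, n i) := by
  classical
  choose Sf a hb he using h
  refine ⟨(Fintype.piFinset Sf).image (fun t => ∑ i, t i),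
    fun m => ∑ t ∈ (Fintype.piFinset Sf).filter (fun t => ∑ i, t i = m),
      μ (fun i => a i (t i)), ?_, ?_⟩
  · intro m hm
    obtain ⟨t, ht, rfl⟩ := Finset.mem_image.mp hm
    exact Finset.sum_le_sum (fun i _ => hb i (t i) (Fintype.mem_piFinset.mp ht i))
  · intro s
    have e1 : μ (fun i => f i s) = ∑ t ∈ Fintype.piFinset Sf, s ^ (∑ i, t i) • μ (fun i => a i (t i)) := by
      have : (fun i => f i s) = fun i => ∑ m ∈ Sf i, s ^ m • a i m := funext (fun i => he i s)
      rw [this, MultilinearMap.map_sum_finset]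
      refine Finset.sum_congr rfl (fun t _ => ?_)
      rw [MultilinearMap.map_smul_univ, Finset.prod_pow_eq_pow_sum]
    show μ (fun i => f i s) = _
    have e3 := Finset.sum_fiberwise_of_maps_to (s := Fintype.piFinset Sf)
      (t := (Fintype.piFinset Sf).image (fun t => ∑ i, t i)) (g := fun t => ∑ i, t i)
      (fun t ht => Finset.mem_image_of_mem _ ht)
      (fun t => (s ^ ∑ i, t i) • μ fun i => a i (t i))
    rw [e1, ← e3]
    refine Finset.sum_congr rfl (fun m _ => ?_)
    rw [Finset.smul_sum]
    refine Finset.sum_congr rfl (fun t ht => ?_)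
    rw [(Finset.mem_filter.mp ht).2]

lemma vdm {B : ℕ} (a : ℕ → A) (h : ∀ s : k, ∑ m ∈ range B, s ^ m • a m = 0) :
    ∀ m ∈ range B, a m = 0 := by
  intro m hm
  rw [← Module.forall_dual_apply_eq_zero_iff k]
  intro φ
  let P : Polynomial k := ∑ i ∈ range B, Polynomial.C (φ (a i)) * Polynomial.X ^ i
  have hP : ∀ s, P.eval s = 0 := by
    intro s
    have h2 := congrArg φ (h s)
    rw [map_sum] at h2
    simp only [map_smul, smul_eq_mul, map_zero] at h2
    have e2 : P.eval s = ∑ i ∈ range B, φ (a i) * s ^ i := by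
      simp [P, Polynomial.eval_finset_sum]
    rw [e2, ← h2]
    exact Finset.sum_congr rfl (fun i _ => mul_comm _ _)
  have hP0 : P = 0 := Polynomial.funext (fun r => by simp [hP r])
  have := congrArg (fun q => Polynomial.coeff q m) hP0
  simpa [P, Polynomial.finset_sum_coeff, Polynomial.coeff_C_mul, Polynomial.coeff_X_pow,
    Finset.sum_ite_eq' (range B) m, hm] using this

lemma polyGE_all_zero {f : k → A} (h : ∀ n, PolyGE f n) : ∀ s, f s = 0 := by
  obtain ⟨S0, a0, _, he0⟩ := h 0
  set D := (S0.sup id) + 1 with hD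
  obtain ⟨S1, a1, hb1, he1⟩ := h D
  set B := max D ((S1.sup id) + 1) with hB
  have hS0sub : ∀ m ∈ S0, m ∈ range B := fun m hm => Finset.mem_range.mpr
    (lt_of_lt_of_le (Nat.lt_succ_of_le (Finset.le_sup (f := id) hm)) (le_max_left _ _))
  have hS1sub : ∀ m ∈ S1, m ∈ range B := fun m hm => Finset.mem_range.mpr
    (lt_of_lt_of_le (Nat.lt_succ_of_le (Finset.le_sup (f := id) hm)) (le_max_right _ _))
  set c : ℕ → A := fun m => (if m ∈ S0 then a0 m else 0) - (if m ∈ S1 then a1 m else 0) with hc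
  have key : ∀ s : k, ∑ m ∈ range B, s ^ m • c m = 0 := by
    intro s
    have e1 : ∀ (S : Finset ℕ) (a : ℕ → A), (∀ m ∈ S, m ∈ range B) →
        (∑ m ∈ range B, s ^ m • (if m ∈ S then a m else 0)) = ∑ m ∈ S, s ^ m • a m := by
      intro S a hsub
      have e2 : (∑ m ∈ range B, s ^ m • (if m ∈ S then a m else 0))
          = ∑ m ∈ range B, (if m ∈ S then s ^ m • a m else 0) := by
        exact Finset.sum_congr rfl (fun m _ => by split <;> simp)
      rw [e2, Finset.sum_ite_mem, Finset.inter_eq_right.mpr hsub]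
    simp only [hc, smul_sub, Finset.sum_sub_distrib, e1 S0 a0 hS0sub, e1 S1 a1 hS1sub,
      ← he0 s, ← he1 s, sub_self]
  have hcz := vdm c key
  intro s
  rw [he0 s]
  refine Finset.sum_eq_zero (fun m hm => ?_)
  have hm1 : m ∉ S1 := by
    intro hmem
    have := hb1 m hmem
    have : m < D := Nat.lt_succ_of_le (Finset.le_sup (f := id) hm)
    omega
  have := hcz m (hS0sub m hm)
  rw [hc] at this
  simp only [hm, if_pos, hm1, if_neg, not_false_iff, sub_zero] at this
  simp [this]

end Poly

section LemA
set_option linter.unusedSectionVars false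
variable {k : Type*} {A : Type*} [Field k] [CharZero k] [AddCommGroup A] [Module k A]

lemma hpart {d : ℕ} (hd : 2 ≤ d) (q : ℕ) (c : Fin d → ℕ)
    (hc : c ∈ (Nat.antidiagonalTuple d q).filter (fun c : Fin d → ℕ => ∀ i, c i ≠ 0)) :
    (∑ i, c i) = q ∧ ∀ i, 1 ≤ c i ∧ c i < q := by
  obtain ⟨hmem, hne⟩ := Finset.mem_filter.mp hc
  have hsum := Finset.Nat.mem_antidiagonalTuple.mp hmem
  refine ⟨hsum, fun i => ⟨Nat.one_le_iff_ne_zero.mpr (hne i), ?_⟩⟩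
  haveI : Nontrivial (Fin d) := Fin.nontrivial_iff_two_le.mpr hd
  obtain ⟨i₂, hi₂⟩ := exists_ne i
  have h2 : c i₂ ≤ ∑ j ∈ Finset.univ.erase i, c j :=
    Finset.single_le_sum (fun _ _ => Nat.zero_le _)
      (Finset.mem_erase.mpr ⟨hi₂, Finset.mem_univ _⟩)
  have h3 := Finset.add_sum_erase Finset.univ c (Finset.mem_univ i)
  have h4 := Nat.one_le_iff_ne_zero.mpr (hne i₂)
  omega

lemma lemA {d : ℕ} (hd : 2 ≤ d) (μ : MultilinearMap k (fun _ : Fin d => A) A)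
    (T : ℕ → A → A) (hT1 : ∀ x, T 1 x = x)
    (hTq : ∀ q, 1 < q → ∀ x, T q x =
      ∑ c ∈ (Nat.antidiagonalTuple d q).filter (fun c : Fin d → ℕ => ∀ i, c i ≠ 0),
        μ (fun i => T (c i) x))
    (p : ℕ) (hYnil : ∀ q, p ≤ q → ∀ x, T q x = 0) :
    ∀ x, (∑ j ∈ Ico 1 p, T j (x - μ (fun _ => x))) = x := by
  intro x
  classical
  set c0 : A := μ (fun _ => x) with hc0
  set G : k → A := fun t => t • x - t ^ d • c0 with hG
  -- T j ∘ G is polynomial of valuation ≥ j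
  have hTG : ∀ j, 1 ≤ j → PolyGE (fun t : k => T j (G t)) j := by
    intro j
    induction j using Nat.strong_induction_on with
    | _ j ih =>
      intro hj
      rcases eq_or_lt_of_le hj with h1 | h1
      · subst h1
        have heq : ∀ t : k, T 1 (G t) = t ^ 1 • x + t ^ d • (-c0) := by
          intro t
          rw [hT1]
          simp [hG, sub_eq_add_neg, smul_neg]
        exact ((polyGE_monomial 1 x).add
          ((polyGE_monomial d (-c0)).mono (by omega))).congr heq
      · have heq : ∀ t : k, T j (G t) =
            ∑ c ∈ (Nat.antidiagonalTuple d j).filter (fun c : Fin d → ℕ => ∀ i, c i ≠ 0),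
              μ (fun i => T (c i) (G t)) := fun t => hTq j h1 (G t)
        refine PolyGE.congr ?_ heq
        refine polyGE_sum _ (fun c : Fin d → ℕ => fun t => μ (fun i => T (c i) (G t))) j ?_
        intro c hc
        obtain ⟨hsum, hci⟩ := hpart hd j c hc
        have := polyGE_mu μ (fun i => fun t => T (c i) (G t)) c
          (fun i => ih (c i) (hci i).2 (hci i).1)
        rwa [hsum] at this
  have huPoly : ∀ (M : ℕ), PolyGE (fun t : k => ∑ j' ∈ Ico 1 M, T j' (G t)) 1 := by
    intro M
    refine polyGE_sum _ (fun j => fun t => T j (G t)) 1 ?_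
    intro j hj
    have hj1 : 1 ≤ j := (Finset.mem_Ico.mp hj).1
    exact (hTG j hj1).mono hj1
  set W : k → A := fun t => (∑ j ∈ Ico 1 p, T j (G t)) - t • x with hW
  have husub : ∀ N, p ≤ N + 1 → ∀ t : k,
      (∑ j ∈ Ico 1 (N+1), T j (G t)) = ∑ j ∈ Ico 1 p, T j (G t) := by
    intro N hN t
    refine (Finset.sum_subset (Finset.Ico_subset_Ico le_rfl hN) ?_).symm
    intro j hj hj2
    simp only [Finset.mem_Ico] at hj hj2
    exact hYnil j (by omega) _
  -- the key pointwise identity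
  have hkey : ∀ N, 1 ≤ N → p ≤ N + 1 → ∀ t : k,
      W t = (∑ i ∈ range d, μ (fun j : Fin d => if (j:ℕ) < i then t • x
                else if (j:ℕ) = i then W t else ∑ j' ∈ Ico 1 (N+1), T j' (G t)))
            - ∑ t' ∈ (Fintype.piFinset fun _ : Fin d => Ico 1 (N+1)).filter
                (fun t' : Fin d → ℕ => ¬ (∑ i, t' i ≤ N)), μ (fun i => T (t' i) (G t)) := by
    intro N hN hpN t
    set y : A := G t with hy
    set u : A := ∑ j ∈ Ico 1 (N+1), T j y with hu
    set E : A := ∑ t' ∈ (Fintype.piFinset fun _ : Fin d => Ico 1 (N+1)).filter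
        (fun t' : Fin d → ℕ => ¬ (∑ i, t' i ≤ N)), μ (fun i => T (t' i) y) with hE
    have hsplit : μ (fun _ : Fin d => u) = (∑ j ∈ Ico 2 (N+1), T j y) + E := by
      have h1 : μ (fun _ : Fin d => u) =
          ∑ t' ∈ Fintype.piFinset (fun _ : Fin d => Ico 1 (N+1)), μ (fun i => T (t' i) y) := by
        rw [hu]
        exact MultilinearMap.map_sum_finset μ (fun _ j => T j y) (fun _ => Ico 1 (N+1))
      have h2 := Finset.sum_filter_add_sum_filter_not
        (Fintype.piFinset fun _ : Fin d => Ico 1 (N+1)) (fun t' : Fin d → ℕ => ∑ i, t' i ≤ N)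
        (fun t' : Fin d → ℕ => μ (fun i => T (t' i) y))
      have hmaps : ∀ t' ∈ (Fintype.piFinset fun _ : Fin d => Ico 1 (N+1)).filter
          (fun t' : Fin d → ℕ => ∑ i, t' i ≤ N), (∑ i, t' i) ∈ Ico 2 (N+1) := by
        intro t' ht'
        obtain ⟨hmem, hle⟩ := Finset.mem_filter.mp ht'
        have h5 : ∀ i, t' i ∈ Ico 1 (N+1) := Fintype.mem_piFinset.mp hmem
        have h6 : d ≤ ∑ i, t' i := by
          calc d = ∑ _i : Fin d, 1 := by simp
          _ ≤ ∑ i, t' i := Finset.sum_le_sum (fun i _ => (Finset.mem_Ico.mp (h5 i)).1)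
        exact Finset.mem_Ico.mpr ⟨by omega, by omega⟩
      have h3 : ∑ t' ∈ (Fintype.piFinset fun _ : Fin d => Ico 1 (N+1)).filter
          (fun t' : Fin d → ℕ => ∑ i, t' i ≤ N), μ (fun i => T (t' i) y)
          = ∑ q ∈ Ico 2 (N+1), T q y := by
        have h4 := Finset.sum_fiberwise_of_maps_to (g := fun t' : Fin d → ℕ => ∑ i, t' i) hmaps
          (fun t' : Fin d → ℕ => μ (fun i => T (t' i) y))
        rw [← h4]
        refine Finset.sum_congr rfl (fun q hq => ?_)
        obtain ⟨hq2, hqN⟩ := Finset.mem_Ico.mp hq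
        rw [hTq q (by omega)]
        refine Finset.sum_congr ?_ (fun _ _ => rfl)
        ext c
        simp only [Finset.mem_filter, Fintype.mem_piFinset, Finset.mem_Ico,
          Finset.Nat.mem_antidiagonalTuple]
        constructor
        · rintro ⟨⟨h5, h6⟩, h7⟩
          exact ⟨h7, fun i => by have := (h5 i).1; omega⟩
        · rintro ⟨h5, h6⟩
          have hle : ∀ i, c i ≤ q := by
            intro i
            rw [← h5]
            exact Finset.single_le_sum (f := c) (fun _ _ => Nat.zero_le _) (Finset.mem_univ i)
          refine ⟨⟨fun i => ⟨Nat.one_le_iff_ne_zero.mpr (h6 i), by have := hle i; omega⟩, by omega⟩, h5⟩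
      rw [h1, ← h2, h3, ← hE]
    have huy : u = y + (μ (fun _ : Fin d => u) - E) := by
      rw [hsplit, hu, Finset.sum_eq_sum_Ico_succ_bot (by omega) (fun j => T j y), hT1]
      abel
    have hvx : t • x = y + t ^ d • c0 := by
      show t • x = (t • x - t ^ d • c0) + t ^ d • c0
      abel
    have hmuvv : μ (fun _ : Fin d => t • x) = t ^ d • c0 := by
      have := MultilinearMap.map_smul_univ μ (fun _ : Fin d => t) (fun _ : Fin d => x)
      simpa [hc0] using this
    have hWt : W t = u - t • x := by
      show (∑ j ∈ Ico 1 p, T j (G t)) - t • x = (∑ j ∈ Ico 1 (N + 1), T j (G t)) - t • x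
      rw [husub N hpN t]
    -- telescope
    have hB0 : μ (fun j : Fin d => if (j:ℕ) < 0 then t • x else u) = μ (fun _ : Fin d => u) := by
      have harg : (fun j : Fin d => if (j:ℕ) < 0 then t • x else u) = (fun _ : Fin d => u) := by
        funext j; simp
      rw [harg]
    have hBd : μ (fun j : Fin d => if (j:ℕ) < d then t • x else u)
        = μ (fun _ : Fin d => t • x) := by
      have harg : (fun j : Fin d => if (j:ℕ) < d then t • x else u)
          = (fun _ : Fin d => t • x) := by
        funext j; simp [j.isLt]
      rw [harg]
    have htel0 := Finset.sum_range_sub'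
      (fun i => μ (fun j : Fin d => if (j:ℕ) < i then t • x else u)) d
    have tel : μ (fun _ : Fin d => u) - μ (fun _ : Fin d => t • x) =
        ∑ i ∈ range d, μ (fun j : Fin d => if (j:ℕ) < i then t • x
          else if (j:ℕ) = i then W t else u) := by
      rw [← hB0, ← hBd, ← htel0]
      refine Finset.sum_congr rfl (fun i hi => ?_)
      have hid : i < d := Finset.mem_range.mp hi
      have e1 : Function.update (fun j : Fin d => if (j:ℕ) < i then t • x else u) ⟨i, hid⟩ u
          = (fun j : Fin d => if (j:ℕ) < i then t • x else u) := by
        funext j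
        rw [Function.update_apply]
        by_cases hj : j = (⟨i, hid⟩ : Fin d)
        · rw [if_pos hj, hj]
          simp
        · rw [if_neg hj]
      have e2 : Function.update (fun j : Fin d => if (j:ℕ) < i then t • x else u) ⟨i, hid⟩ (t • x)
          = (fun j : Fin d => if (j:ℕ) < i + 1 then t • x else u) := by
        funext j
        rw [Function.update_apply]
        by_cases hj : j = (⟨i, hid⟩ : Fin d)
        · rw [if_pos hj, hj]
          simp
        · rw [if_neg hj]
          have hjv : (j:ℕ) ≠ i := fun hcon => hj (Fin.ext hcon)
          by_cases hlt : (j:ℕ) < i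
          · rw [if_pos hlt, if_pos (by omega)]
          · rw [if_neg hlt, if_neg (by omega)]
      have e3 : Function.update (fun j : Fin d => if (j:ℕ) < i then t • x else u) ⟨i, hid⟩
            (u - t • x)
          = (fun j : Fin d => if (j:ℕ) < i then t • x else if (j:ℕ) = i then W t else u) := by
        funext j
        rw [Function.update_apply]
        by_cases hj : j = (⟨i, hid⟩ : Fin d)
        · rw [if_pos hj, hj, ← hWt]
          simp
        · rw [if_neg hj]
          have hjv : (j:ℕ) ≠ i := fun hcon => hj (Fin.ext hcon)
          by_cases hlt : (j:ℕ) < i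
          · rw [if_pos hlt, if_pos hlt]
          · rw [if_neg hlt, if_neg hlt, if_neg hjv]
      calc μ (fun j : Fin d => if (j:ℕ) < i then t • x else u)
            - μ (fun j : Fin d => if (j:ℕ) < i + 1 then t • x else u)
          = μ (Function.update (fun j : Fin d => if (j:ℕ) < i then t • x else u) ⟨i, hid⟩ u)
            - μ (Function.update (fun j : Fin d => if (j:ℕ) < i then t • x else u) ⟨i, hid⟩
              (t • x)) := by rw [e1, e2]
        _ = μ (Function.update (fun j : Fin d => if (j:ℕ) < i then t • x else u) ⟨i, hid⟩
              (u - t • x)) := (MultilinearMap.map_update_sub μ _ _ _ _).symm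
        _ = _ := by rw [e3]
    calc W t = u - t • x := hWt
      _ = (y + (μ (fun _ : Fin d => u) - E)) - (y + t ^ d • c0) := by rw [← huy, ← hvx]
      _ = (μ (fun _ : Fin d => u) - μ (fun _ : Fin d => t • x)) - E := by rw [hmuvv]; abel
      _ = _ := by rw [tel]
  -- main induction
  have main : ∀ n, PolyGE W n := by
    intro n
    induction n with
    | zero =>
      have h1 : PolyGE (fun t : k => ∑ j ∈ Ico 1 p, T j (G t)) 0 := (huPoly p).mono (by omega)
      have h2 : PolyGE (fun t : k => t • x) 0 :=
        ((polyGE_monomial 1 x).mono (Nat.zero_le _)).congr (fun s => by rw [pow_one])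
      exact h1.sub h2
    | succ n ihn =>
      set N := max n (max 1 (p - 1)) with hNdef
      have hN1 : 1 ≤ N := by omega
      have hpN : p ≤ N + 1 := by omega
      refine PolyGE.congr (PolyGE.sub ?_ ?_) (hkey N hN1 hpN)
      · refine polyGE_sum (range d) (fun i => fun t => μ (fun j : Fin d =>
          if (j:ℕ) < i then t • x else if (j:ℕ) = i then W t
          else ∑ j' ∈ Ico 1 (N+1), T j' (G t))) (n+1) ?_
        intro i hi
        have hid : i < d := Finset.mem_range.mp hi
        set iF : Fin d := ⟨i, hid⟩ with hiF
        have hslot : ∀ j : Fin d, PolyGE (if (j:ℕ) < i then (fun t : k => t • x)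
            else if (j:ℕ) = i then W else (fun t => ∑ j' ∈ Ico 1 (N+1), T j' (G t)))
            (if (j:ℕ) < i then 1 else if (j:ℕ) = i then n else 1) := by
          intro j
          by_cases hlt : (j:ℕ) < i
          · rw [if_pos hlt, if_pos hlt]
            exact ((polyGE_monomial 1 x).congr (fun s => by rw [pow_one]))
          · rw [if_neg hlt, if_neg hlt]
            by_cases heq : (j:ℕ) = i
            · rw [if_pos heq, if_pos heq]; exact ihn
            · rw [if_neg heq, if_neg heq]; exact huPoly (N+1)
        have hmu := polyGE_mu μ _ _ hslot
        have hsumns : (∑ j : Fin d, if (j:ℕ) < i then 1 else if (j:ℕ) = i then n else 1)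
            = n + (d - 1) := by
          rw [← Finset.add_sum_erase Finset.univ _ (Finset.mem_univ (⟨i, hid⟩ : Fin d))]
          have h5 : (if (((⟨i, hid⟩ : Fin d)):ℕ) < i then 1
              else if (((⟨i, hid⟩ : Fin d)):ℕ) = i then n else 1) = n := by simp
          have h6 : (∑ j ∈ Finset.univ.erase (⟨i, hid⟩ : Fin d),
              if (j:ℕ) < i then 1 else if (j:ℕ) = i then n else 1) = d - 1 := by
            rw [Finset.sum_congr rfl (g := fun _ => 1) ?_]
            · rw [Finset.sum_const, Finset.card_erase_of_mem (Finset.mem_univ _)]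
              simp
            · intro j hj
              have hj2 : j ≠ ⟨i, hid⟩ := (Finset.mem_erase.mp hj).1
              have hjv : (j:ℕ) ≠ i := fun hcon => hj2 (Fin.ext hcon)
              by_cases hlt : (j:ℕ) < i
              · rw [if_pos hlt]
              · rw [if_neg hlt, if_neg hjv]
          rw [h5, h6]
        rw [hsumns] at hmu
        refine (hmu.mono (show n + 1 ≤ n + (d-1) by omega)).congr ?_
        intro t
        have harg : (fun j : Fin d => if (j:ℕ) < i then t • x
              else if (j:ℕ) = i then W t else ∑ j' ∈ Ico 1 (N+1), T j' (G t))
            = (fun j : Fin d => (if (j:ℕ) < i then (fun t : k => t • x)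
              else if (j:ℕ) = i then W
              else (fun t => ∑ j' ∈ Ico 1 (N+1), T j' (G t))) t) := by
          funext j
          by_cases hlt : (j:ℕ) < i
          · simp only [if_pos hlt]
          · by_cases heq : (j:ℕ) = i
            · simp only [if_neg hlt, if_pos heq]
            · simp only [if_neg hlt, if_neg heq]
        exact congrArg (⇑μ) harg
      · refine polyGE_sum _ (fun t' : Fin d → ℕ => fun t => μ (fun i => T (t' i) (G t))) (n+1) ?_
        intro t' ht'
        obtain ⟨hmem, hgt⟩ := Finset.mem_filter.mp ht'
        have h5 : ∀ i, t' i ∈ Ico 1 (N+1) := Fintype.mem_piFinset.mp hmem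
        have hmu := polyGE_mu μ (fun i => fun t => T (t' i) (G t)) t'
          (fun i => hTG (t' i) (Finset.mem_Ico.mp (h5 i)).1)
        exact hmu.mono (by omega)
  have hW1 := polyGE_all_zero main 1
  have hG1 : G 1 = x - c0 := by rw [hG]; simp
  have : (∑ j ∈ Ico 1 p, T j (G 1)) - (1:k) • x = 0 := hW1
  rw [hG1, one_smul, sub_eq_zero] at this
  exact this

end LemA

section Chain
set_option linter.unusedSectionVars false
variable {k : Type*} {A : Type*} [Field k] [CharZero k] [AddCommGroup A] [Module k A]

lemma chain {d : ℕ} (hd : 2 ≤ d) (μ : MultilinearMap k (fun _ : Fin d => A) A)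
    (T : ℕ → A → A) (hT1 : ∀ x, T 1 x = x)
    (hTq : ∀ q, 1 < q → ∀ x, T q x =
      ∑ c ∈ (Nat.antidiagonalTuple d q).filter (fun c : Fin d → ℕ => ∀ i, c i ≠ 0),
        μ (fun i => T (c i) x))
    (S : ℕ → A → A → A) (hS1 : ∀ y t, S 1 y t = t)
    (hSq : ∀ q, 1 < q → ∀ y t, S q y t =
      ∑ c ∈ (Nat.antidiagonalTuple d q).filter (fun c : Fin d → ℕ => ∀ i, c i ≠ 0),
        ∑ j : Fin d, μ (fun i => if i = j then S (c i) y t else T (c i) y)) :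
    ∀ q, 1 ≤ q → ∀ x z : A,
      PolyGE (fun s : k => T q (x + s • z) - T q x - s • S q x z) 2 := by
  classical
  haveI : NeZero d := ⟨by omega⟩
  intro q
  induction q using Nat.strong_induction_on with
  | _ q ih =>
    intro hq x z
    rcases eq_or_lt_of_le hq with h1 | h1
    · subst h1
      refine (polyGE_zero 2).congr ?_
      intro s
      rw [hS1, hT1, hT1]
      abel
    · have heq : ∀ s : k, T q (x + s • z) - T q x - s • S q x z
          = ∑ c ∈ (Nat.antidiagonalTuple d q).filter (fun c : Fin d → ℕ => ∀ i, c i ≠ 0),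
            ((μ (fun i => T (c i) (x + s • z)) - μ (fun i => T (c i) x))
              - s • ∑ j : Fin d, μ (fun i => if i = j then S (c i) x z else T (c i) x)) := by
        intro s
        rw [hTq q h1, hTq q h1, hSq q h1, Finset.smul_sum,
          ← Finset.sum_sub_distrib, ← Finset.sum_sub_distrib]
      refine PolyGE.congr ?_ heq
      refine polyGE_sum _ (fun c : Fin d → ℕ => fun s =>
        (μ (fun i => T (c i) (x + s • z)) - μ (fun i => T (c i) x))
          - s • ∑ j : Fin d, μ (fun i => if i = j then S (c i) x z else T (c i) x)) 2 ?_
      intro c hc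
      obtain ⟨hsum, hci⟩ := hpart hd q c hc
      -- abbreviations
      set Avals : Fin d → A := fun i => T (c i) x with hAvals
      set h : Fin d → k → A := fun i s => T (c i) (x + s • z) - T (c i) x with hh
      set r : Fin d → k → A := fun i s => h i s - s • S (c i) x z with hr
      have hrPoly : ∀ i, PolyGE (r i) 2 := by
        intro i
        exact (ih (c i) (hci i).2 (hci i).1 x z).congr (fun s => rfl)
      have hhPoly : ∀ i, PolyGE (h i) 1 := by
        intro i
        have h2 : PolyGE (fun s : k => s • S (c i) x z + r i s) 1 :=
          ((polyGE_monomial 1 (S (c i) x z)).congr (fun s => by rw [pow_one])).add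
            ((hrPoly i).mono (by omega))
        exact h2.congr (fun s => by simp only [hr, hh]; abel)
      -- pointwise expansion
      have hpoint : ∀ s : k,
          (μ (fun i => T (c i) (x + s • z)) - μ (fun i => T (c i) x))
            - s • ∑ j : Fin d, μ (fun i => if i = j then S (c i) x z else T (c i) x)
          = (∑ j : Fin d, μ (Function.update Avals j (r j s)))
            + ∑ tset ∈ Finset.univ.filter (fun tset : Finset (Fin d) => ¬ tset.card ≤ 1),
                μ (tset.piecewise (fun i => h i s) Avals) := by
        intro s
        have e0 : (fun i => T (c i) (x + s • z)) = (fun i => h i s) + Avals := by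
          funext i
          show T (c i) (x + s • z) = h i s + Avals i
          simp only [hh, hAvals]
          abel
        have e1 : μ (fun i => T (c i) (x + s • z))
            = ∑ tset : Finset (Fin d), μ (tset.piecewise (fun i => h i s) Avals) := by
          rw [e0, MultilinearMap.map_add_univ]
        have e2 : (Finset.univ.filter (fun tset : Finset (Fin d) => tset.card ≤ 1))
            = insert ∅ (Finset.univ.image (fun j : Fin d => ({j} : Finset (Fin d)))) := by
          ext tset
          constructor
          · intro hmem
            have hcard : tset.card ≤ 1 := (Finset.mem_filter.mp hmem).2
            rcases Finset.card_le_one_iff_subset_singleton.mp hcard with ⟨a, ha⟩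
            rcases Finset.subset_singleton_iff.mp ha with h2 | h2
            · rw [h2]; exact Finset.mem_insert_self _ _
            · rw [h2]
              exact Finset.mem_insert_of_mem (Finset.mem_image_of_mem _ (Finset.mem_univ a))
          · intro hmem
            rcases Finset.mem_insert.mp hmem with h2 | h2
            · rw [h2]
              exact Finset.mem_filter.mpr ⟨Finset.mem_univ _, by simp⟩
            · obtain ⟨a, -, h2⟩ := Finset.mem_image.mp h2
              rw [← h2]
              exact Finset.mem_filter.mpr ⟨Finset.mem_univ _,
                le_of_eq (Finset.card_singleton a)⟩
        have e3 : ∑ tset : Finset (Fin d), μ (tset.piecewise (fun i => h i s) Avals)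
            = (μ Avals + ∑ j : Fin d, μ (Function.update Avals j (h j s)))
              + ∑ tset ∈ Finset.univ.filter (fun tset : Finset (Fin d) => ¬ tset.card ≤ 1),
                  μ (tset.piecewise (fun i => h i s) Avals) := by
          rw [← Finset.sum_filter_add_sum_filter_not Finset.univ
            (fun tset : Finset (Fin d) => tset.card ≤ 1)
            (fun tset => μ (tset.piecewise (fun i => h i s) Avals))]
          congr 1
          rw [e2, Finset.sum_insert (by simp), Finset.sum_image
            (fun a _ b _ hab => Finset.singleton_injective hab)]
          have h0 : μ ((∅ : Finset (Fin d)).piecewise (fun i => h i s) Avals) = μ Avals := by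
            rw [Finset.piecewise_empty]
          rw [h0]
          congr 1
          refine Finset.sum_congr rfl (fun j _ => ?_)
          rw [Finset.piecewise_singleton]
        have e4 : ∀ j : Fin d, μ (Function.update Avals j (h j s))
            = s • μ (Function.update Avals j (S (c j) x z)) + μ (Function.update Avals j (r j s)) := by
          intro j
          have : h j s = s • S (c j) x z + r j s := by simp only [hr, hh]; abel
          rw [this, MultilinearMap.map_update_add, MultilinearMap.map_update_smul]
        have e5 : ∀ j : Fin d, μ (Function.update Avals j (S (c j) x z))
            = μ (fun i => if i = j then S (c i) x z else T (c i) x) := by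
          intro j
          congr 1
          funext i
          rw [Function.update_apply]
          by_cases hij : i = j
          · rw [if_pos hij, if_pos hij, hij]
          · rw [if_neg hij, if_neg hij, hAvals]
        rw [e1, e3]
        have e6 : ∑ j : Fin d, μ (Function.update Avals j (h j s))
            = s • (∑ j : Fin d, μ (fun i => if i = j then S (c i) x z else T (c i) x))
              + ∑ j : Fin d, μ (Function.update Avals j (r j s)) := by
          rw [Finset.smul_sum, ← Finset.sum_add_distrib]
          refine Finset.sum_congr rfl (fun j _ => ?_)
          rw [e4 j, e5 j]
        rw [e6]
        abel
      refine PolyGE.congr (PolyGE.add ?_ ?_) hpoint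
      · refine polyGE_sum _ (fun j : Fin d => fun s => μ (Function.update Avals j (r j s))) 2 ?_
        intro j _
        have hslot : ∀ i : Fin d, PolyGE (if i = j then r i else (fun _ : k => Avals i))
            (if i = j then 2 else 0) := by
          intro i
          by_cases hij : i = j
          · rw [if_pos hij, if_pos hij]; exact hrPoly i
          · rw [if_neg hij, if_neg hij]; exact polyGE_const (Avals i)
        have hmu := polyGE_mu μ _ _ hslot
        have hsum2 : (∑ i : Fin d, if i = j then 2 else 0) = 2 := by
          rw [Finset.sum_ite_eq' Finset.univ j (fun _ => 2)]
          simp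
        rw [hsum2] at hmu
        refine hmu.congr ?_
        intro s
        have harg : Function.update Avals j (r j s)
            = (fun i => (if i = j then r i else (fun _ : k => Avals i)) s) := by
          funext i
          rw [Function.update_apply]
          by_cases hij : i = j
          · rw [if_pos hij, if_pos hij, hij]
          · rw [if_neg hij, if_neg hij]
        exact congrArg (⇑μ) harg
      · refine polyGE_sum _ (fun tset : Finset (Fin d) => fun s =>
          μ (tset.piecewise (fun i => h i s) Avals)) 2 ?_
        intro tset htset
        have hcard : 2 ≤ tset.card := by
          have := (Finset.mem_filter.mp htset).2
          omega
        have hslot : ∀ i : Fin d, PolyGE (if i ∈ tset then h i else (fun _ : k => Avals i))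
            (if i ∈ tset then 1 else 0) := by
          intro i
          by_cases hit : i ∈ tset
          · rw [if_pos hit, if_pos hit]; exact hhPoly i
          · rw [if_neg hit, if_neg hit]; exact polyGE_const (Avals i)
        have hmu := polyGE_mu μ _ _ hslot
        have hsumc : (∑ i : Fin d, if i ∈ tset then 1 else 0) = tset.card := by
          simp [Finset.sum_ite_mem]
        rw [hsumc] at hmu
        refine (hmu.mono hcard).congr ?_
        intro s
        have harg : tset.piecewise (fun i => h i s) Avals
            = (fun i => (if i ∈ tset then h i else (fun _ : k => Avals i)) s) := by
          funext i
          by_cases hit : i ∈ tset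
          · rw [Finset.piecewise_eq_of_mem _ _ _ hit, if_pos hit]
          · rw [Finset.piecewise_eq_of_notMem _ _ _ hit, if_neg hit]
        exact congrArg (⇑μ) harg

lemma Snil {d : ℕ} (hd : 2 ≤ d) (μ : MultilinearMap k (fun _ : Fin d => A) A)
    (T : ℕ → A → A) (hT1 : ∀ x, T 1 x = x)
    (hTq : ∀ q, 1 < q → ∀ x, T q x =
      ∑ c ∈ (Nat.antidiagonalTuple d q).filter (fun c : Fin d → ℕ => ∀ i, c i ≠ 0),
        μ (fun i => T (c i) x))
    (S : ℕ → A → A → A) (hS1 : ∀ y t, S 1 y t = t)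
    (hSq : ∀ q, 1 < q → ∀ y t, S q y t =
      ∑ c ∈ (Nat.antidiagonalTuple d q).filter (fun c : Fin d → ℕ => ∀ i, c i ≠ 0),
        ∑ j : Fin d, μ (fun i => if i = j then S (c i) y t else T (c i) y))
    (p : ℕ) (hYnil : ∀ q, p ≤ q → ∀ x : A, T q x = 0) :
    ∀ q, p ≤ q → 1 ≤ q → ∀ x z : A, S q x z = 0 := by
  intro q hpq hq x z
  have hc := chain (k := k) hd μ T hT1 hTq S hS1 hSq q hq x z
  have h3 : PolyGE (fun s : k => s • S q x z) 2 := by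
    refine (hc.neg).congr ?_
    intro s
    rw [hYnil q hpq, hYnil q hpq]
    abel
  obtain ⟨Sf, a, hb, he⟩ := h3
  have he' : ∀ s : k, s • S q x z = ∑ m ∈ Sf, s ^ m • a m := he
  set B := max 2 (Sf.sup id + 1) with hB
  have hSfsub : ∀ m ∈ Sf, m ∈ Finset.range B := fun m hm => Finset.mem_range.mpr
    (lt_of_lt_of_le (Nat.lt_succ_of_le (Finset.le_sup (f := id) hm)) (le_max_right _ _))
  set cc : ℕ → A := fun m => (if m = 1 then S q x z else 0) - (if m ∈ Sf then a m else 0) with hcc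
  have hkey : ∀ s : k, ∑ m ∈ Finset.range B, s ^ m • cc m = 0 := by
    intro s
    have e1 : (∑ m ∈ Finset.range B, s ^ m • (if m = 1 then S q x z else 0))
        = s • S q x z := by
      have : ∀ m ∈ Finset.range B, s ^ m • (if m = 1 then S q x z else 0)
          = if m = 1 then s ^ m • S q x z else 0 := by
        intro m _; split <;> simp
      rw [Finset.sum_congr rfl this, Finset.sum_ite_eq' (Finset.range B) 1
        (fun m => s ^ m • S q x z)]
      rw [if_pos (Finset.mem_range.mpr (by omega)), pow_one]
    have e2 : (∑ m ∈ Finset.range B, s ^ m • (if m ∈ Sf then a m else 0))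
        = ∑ m ∈ Sf, s ^ m • a m := by
      have : ∀ m ∈ Finset.range B, s ^ m • (if m ∈ Sf then a m else 0)
          = if m ∈ Sf then s ^ m • a m else 0 := by
        intro m _; split <;> simp
      rw [Finset.sum_congr rfl this, Finset.sum_ite_mem,
        Finset.inter_eq_right.mpr hSfsub]
    simp only [hcc, smul_sub, Finset.sum_sub_distrib, e1, e2, ← he' s, sub_self]
  have hc1 := vdm cc hkey 1 (Finset.mem_range.mpr (by omega))
  have h1Sf : 1 ∉ Sf := fun hmem => by have := hb 1 hmem; omega
  rw [hcc] at hc1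
  simp only [if_pos rfl, h1Sf, if_neg, not_false_iff, sub_zero] at hc1
  exact hc1

end Chain

/-- The partially linearized identity `dγ(g(x), dg(x,z)) = z` for a Yagzhev nil
symmetric `d`-linear algebra. Here `S j y t = (1/(j-1)!) T_j^{mult}(y,...,y,t)` is the
partial linearization of `T j` (characterized by the chain-rule recursion below),
`g x = x - μ(x,...,x)`, `dg x z = z - d·μ(x,...,x,z)` and
`dγ y t = ∑_{j=1}^{p-1} S j y t`. -/
theorem stmt10 {k A : Type*} [Field k] [CharZero k] [AddCommGroup A] [Module k A]
    {d : ℕ} (hd : 2 ≤ d) (μ : MultilinearMap k (fun _ : Fin d => A) A)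
    (hsymm : ∀ (σ : Equiv.Perm (Fin d)) (v : Fin d → A), μ (v ∘ σ) = μ v)
    (T : ℕ → A → A)
    (hT1 : ∀ x, T 1 x = x)
    (hTq : ∀ q, 1 < q → ∀ x, T q x =
      ∑ c ∈ (Finset.Nat.antidiagonalTuple d q).filter (fun c => ∀ i, c i ≠ 0),
        μ (fun i => T (c i) x))
    (S : ℕ → A → A → A)
    (hS1 : ∀ y t, S 1 y t = t)
    (hSq : ∀ q, 1 < q → ∀ y t, S q y t =
      ∑ c ∈ (Finset.Nat.antidiagonalTuple d q).filter (fun c => ∀ i, c i ≠ 0),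
        ∑ j : Fin d, μ (fun i => if i = j then S (c i) y t else T (c i) y))
    (p : ℕ)
    (hYnil : ∀ q, p ≤ q → ∀ x : A, T q x = 0) :
    ∀ x z : A,
      (∑ j ∈ Finset.Ico 1 p,
        S j (x - μ (fun _ => x))
          (z - (d : k) • μ (fun i => if (i : ℕ) = 0 then z else x))) = z := by
  classical
  haveI : NeZero d := ⟨by omega⟩
  intro x z
  rcases Nat.eq_zero_or_pos p with hp0 | hp1
  · subst hp0
    have hz : z = 0 := by rw [← hT1 z, hYnil 1 (by omega) z]
    simp [hz]
  -- the dual-number algebra on A × A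
  set fstL : (A × A) →ₗ[k] A := LinearMap.fst k A A with hfstL
  set sndL : (A × A) →ₗ[k] A := LinearMap.snd k A A with hsndL
  set μ1 : MultilinearMap k (fun _ : Fin d => A × A) A :=
    μ.compLinearMap (fun _ => fstL) with hμ1
  set μ2 : MultilinearMap k (fun _ : Fin d => A × A) A :=
    ∑ j : Fin d, μ.compLinearMap (fun i => if i = j then sndL else fstL) with hμ2
  set μ' : MultilinearMap k (fun _ : Fin d => A × A) (A × A) := μ1.prod μ2 with hμ'
  have hμ'eval : ∀ v : Fin d → A × A,
      μ' v = (μ (fun i => (v i).1),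
        ∑ j : Fin d, μ (fun i => if i = j then (v i).2 else (v i).1)) := by
    intro v
    rw [hμ']
    refine Prod.ext ?_ ?_
    · rfl
    · show μ2 v = _
      rw [hμ2, MultilinearMap.sum_apply]
      refine Finset.sum_congr rfl (fun j _ => ?_)
      show μ (fun i => (if i = j then sndL else fstL) (v i)) = _
      refine congrArg (⇑μ) ?_
      funext i
      by_cases hij : i = j
      · rw [if_pos hij, if_pos hij]; rfl
      · rw [if_neg hij, if_neg hij]; rfl
  set T' : ℕ → A × A → A × A := fun q v => (T q v.1, S q v.1 v.2) with hT'
  have hT1' : ∀ v : A × A, T' 1 v = v := by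
    intro v
    rw [hT']
    exact Prod.ext (hT1 v.1) (hS1 v.1 v.2)
  have hTq' : ∀ q, 1 < q → ∀ v : A × A, T' q v =
      ∑ c ∈ (Finset.Nat.antidiagonalTuple d q).filter (fun c : Fin d → ℕ => ∀ i, c i ≠ 0),
        μ' (fun i => T' (c i) v) := by
    intro q hq v
    have hev : ∀ c : Fin d → ℕ, μ' (fun i => T' (c i) v)
        = (μ (fun i => T (c i) v.1),
           ∑ j : Fin d, μ (fun i => if i = j then S (c i) v.1 v.2 else T (c i) v.1)) := by
      intro c
      rw [hμ'eval]
    refine Prod.ext ?_ ?_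
    · rw [Prod.fst_sum]
      show T q v.1 = _
      rw [hTq q hq v.1]
      exact Finset.sum_congr rfl (fun c _ => by rw [hev c])
    · rw [Prod.snd_sum]
      show S q v.1 v.2 = _
      rw [hSq q hq v.1 v.2]
      exact Finset.sum_congr rfl (fun c _ => by rw [hev c])
  have hSnil := Snil hd μ T hT1 hTq S hS1 hSq p hYnil
  have hYnil' : ∀ q, max p 1 ≤ q → ∀ v : A × A, T' q v = 0 := by
    intro q hq v
    rw [hT']
    refine Prod.ext ?_ ?_
    · show T q v.1 = (0 : A × A).1
      rw [hYnil q (by omega) v.1]; rfl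
    · show S q v.1 v.2 = (0 : A × A).2
      rw [hSnil q (by omega) (by omega) v.1 v.2]; rfl
  have hall := lemA hd μ' T' hT1' hTq' (max p 1) hYnil' (x, z)
  -- compute the argument
  set w0 : Fin d → A := fun i => if (i : ℕ) = 0 then z else x with hw0
  have hswap : ∀ j : Fin d, μ (fun i => if i = j then z else x) = μ w0 := by
    intro j
    have harg : (fun i => if i = j then z else x) = w0 ∘ (Equiv.swap j 0) := by
      funext i
      show (if i = j then z else x) = (if (((Equiv.swap j 0) i : Fin d) : ℕ) = 0 then z else x)
      by_cases hij : i = j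
      · rw [if_pos hij, hij, Equiv.swap_apply_left]
        simp
      · have hne : Equiv.swap j 0 i ≠ 0 := by
          intro hcon
          apply hij
          have h2 : Equiv.swap j 0 i = Equiv.swap j 0 j := by
            rw [hcon, Equiv.swap_apply_left]
          exact (Equiv.swap j 0).injective h2
        have hvne : ¬ ((((Equiv.swap j 0) i : Fin d)) : ℕ) = 0 := by
          intro hval
          exact hne (Fin.ext (by simpa using hval))
        rw [if_neg hij, if_neg hvne]
    rw [harg, hsymm (Equiv.swap j 0) w0]
  have hsnd : (μ' (fun _ : Fin d => (x, z))).2 = (d : k) • μ w0 := by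
    rw [hμ'eval]
    show (∑ j : Fin d, μ (fun i => if i = j then z else x)) = _
    rw [Finset.sum_congr rfl (fun j _ => hswap j), Finset.sum_const, Finset.card_univ,
      Fintype.card_fin, Nat.cast_smul_eq_nsmul]
  have hfst : (μ' (fun _ : Fin d => (x, z))).1 = μ (fun _ => x) := by
    rw [hμ'eval]
  have hargeq : (x, z) - μ' (fun _ : Fin d => (x, z))
      = (x - μ (fun _ => x), z - (d : k) • μ w0) := by
    refine Prod.ext ?_ ?_
    · show x - (μ' (fun _ : Fin d => (x, z))).1 = _
      rw [hfst]
    · show z - (μ' (fun _ : Fin d => (x, z))).2 = _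
      rw [hsnd]
  rw [hargeq] at hall
  have hmax : max p 1 = p := by omega
  rw [hmax] at hall
  have hall2 := congrArg Prod.snd hall
  rw [Prod.snd_sum] at hall2
  exact hall2
end

section
/- Let A be a commutative binary algebra over a field of characteristic zero satisfying the 3-Engel identity x(x(xy)) ≡ 0. Then A is Yagzhev nil: there exists p such that T_q(x) = 0 for all x ∈ A and all q ≥ p, where T_1(x) = x and T_q(x) = Σ_{i+j=q} T_i(x)T_j(x). -/
open Finset

private theorem aux_two_smul {k A : Type*} [Field k] [CharZero k] [AddCommGroup A] [Module k A]
    (v : A) (h : v + v = 0) : v = 0 := by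
  have h2 : (2 : k) • v = 0 := by rw [two_smul]; exact h
  rcases smul_eq_zero.mp h2 with h' | h'
  · exact absurd h' (by norm_num)
  · exact h'

private theorem aux_sum_smul {k A : Type*} [Field k] [AddCommGroup A] [Module k A]
    (v : A) (S : Finset (ℕ × ℕ)) (F : ℕ × ℕ → A)
    (h : ∀ pr ∈ S, ∃ s : k, F pr = s • v) : ∃ t : k, ∑ pr ∈ S, F pr = t • v := by
  classical
  induction S using Finset.induction_on with
  | empty => exact ⟨0, by simp⟩
  | @insert a s ha ih =>
    obtain ⟨t, ht⟩ := ih (fun pr hpr => h pr (Finset.mem_insert_of_mem hpr))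
    obtain ⟨s0, hs0⟩ := h a (Finset.mem_insert_self a s)
    exact ⟨s0 + t, by rw [Finset.sum_insert ha, ht, hs0, add_smul]⟩

private def g18 {k A : Type*} [Field k] [AddCommGroup A] [Module k A]
    (mul : A →ₗ[k] A →ₗ[k] A) (x : A) : ℕ → A := fun n =>
  if n = 1 then x
  else if n = 2 then mul x x
  else if n = 3 then mul x (mul x x)
  else if n = 4 then mul (mul x x) (mul x x)
  else if n = 5 then mul (mul x x) (mul x (mul x x))
  else if n = 6 then mul (mul x x) (mul (mul x x) (mul x x))
  else 0

private theorem g18_big {k A : Type*} [Field k] [AddCommGroup A] [Module k A]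
    (mul : A →ₗ[k] A →ₗ[k] A) (x : A) (n : ℕ) (hn : 7 ≤ n) : g18 mul x n = 0 := by
  unfold g18
  split_ifs <;> first | rfl | (exfalso; omega)

/-- Singer: a 3-Engel commutative binary algebra is Yagzhev nil. -/
theorem stmt18 {k A : Type*} [Field k] [CharZero k] [AddCommGroup A] [Module k A]
    (mul : A →ₗ[k] A →ₗ[k] A)
    (hcomm : ∀ x y : A, mul x y = mul y x)
    (hEngel3 : ∀ x y : A, mul x (mul x (mul x y)) = 0)
    (T : ℕ → A → A)
    (hT1 : ∀ x, T 1 x = x)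
    (hTq : ∀ q, 1 < q → ∀ x, T q x =
      ∑ pr ∈ (Finset.HasAntidiagonal.antidiagonal q).filter (fun pr => pr.1 ≠ 0 ∧ pr.2 ≠ 0),
        mul (T pr.1 x) (T pr.2 x)) :
    ∃ p : ℕ, ∀ q, p ≤ q → ∀ x : A, T q x = 0 := by
  -- polarized Engel identity
  have hpol : ∀ a b c y : A,
      mul a (mul b (mul c y)) + mul a (mul c (mul b y)) + mul b (mul a (mul c y)) +
        mul b (mul c (mul a y)) + mul c (mul a (mul b y)) + mul c (mul b (mul a y)) = 0 := by
    intro a b c y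
    calc mul a (mul b (mul c y)) + mul a (mul c (mul b y)) + mul b (mul a (mul c y)) +
          mul b (mul c (mul a y)) + mul c (mul a (mul b y)) + mul c (mul b (mul a y))
        = mul (a+b+c) (mul (a+b+c) (mul (a+b+c) y))
          - mul (a+b) (mul (a+b) (mul (a+b) y))
          - mul (a+c) (mul (a+c) (mul (a+c) y))
          - mul (b+c) (mul (b+c) (mul (b+c) y))
          + mul a (mul a (mul a y)) + mul b (mul b (mul b y)) + mul c (mul c (mul c y)) := by
          simp only [map_add, LinearMap.add_apply]; abel
      _ = 0 := by
          rw [hEngel3, hEngel3, hEngel3, hEngel3, hEngel3, hEngel3, hEngel3]; abel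
  refine ⟨7, fun q hq x => ?_⟩
  obtain ⟨B, hB⟩ : ∃ B, B = mul x x := ⟨_, rfl⟩
  obtain ⟨C, hC⟩ : ∃ C, C = mul x B := ⟨_, rfl⟩
  obtain ⟨D, hD⟩ : ∃ D, D = mul B B := ⟨_, rfl⟩
  obtain ⟨E, hE⟩ : ∃ E, E = mul B C := ⟨_, rfl⟩
  obtain ⟨F, hF⟩ : ∃ F, F = mul B D := ⟨_, rfl⟩
  -- identity 1 : x·C = 0
  have h1 : mul x C = 0 := by rw [hC, hB]; exact hEngel3 x x
  -- identity 2 : x·D = -E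
  have h2 : mul x D = -E := by
    have h := hpol x x B x
    simp only [hcomm B x, ← hB, ← hC, ← hD, ← hE, h1, map_zero, zero_add, add_zero] at h
    have h' : (mul x D + E) + (mul x D + E) = 0 := by rw [← h]; try abel
    have h'' := aux_two_smul (k := k) _ h'
    exact eq_neg_of_add_eq_zero_left h''
  -- identity 3 : x·E = -F
  have h3 : mul x E = -F := by
    have h := hpol x B B x
    simp only [hcomm B x, ← hB, ← hC, ← hD, ← hE, ← hF, h1, map_zero, zero_add, add_zero] at h
    have h' : (mul x E + F) + (mul x E + F) = 0 := by rw [← h]; try abel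
    have h'' := aux_two_smul (k := k) _ h'
    exact eq_neg_of_add_eq_zero_left h''
  -- identity 4 : C·C = F
  have h4 : mul C C = F := by
    have h := hpol x x C x
    simp only [hcomm C x, hcomm C B, ← hB, ← hC, ← hE, h1, map_zero, zero_add, add_zero] at h
    have h' : (mul x E + mul C C) + (mul x E + mul C C) = 0 := by rw [← h]; try abel
    have h'' := aux_two_smul (k := k) _ h'
    have h3' := eq_neg_of_add_eq_zero_left h''
    rw [h3] at h3'
    exact (neg_inj.mp h3').symm
  -- identity 5 : x·F = 0
  have h5 : mul x F = 0 := by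
    have h := hEngel3 x D
    simp only [h2, map_neg, h3, neg_neg] at h
    exact h
  -- identity 6 : C·D = 0
  have h6 : mul C D = 0 := by
    have h := hpol x x D x
    simp only [hcomm D x, hcomm D B, hcomm D C, ← hB, ← hC, ← hF, h2, map_neg, h3, neg_neg,
      h5, map_zero, neg_zero, zero_add, add_zero] at h
    have h' : mul C D + mul C D = 0 := by rw [← h]; try abel
    exact aux_two_smul (k := k) _ h'
  -- identity 7 : B·E = 0
  have h7 : mul B E = 0 := by
    have h := hpol x B C x
    simp only [hcomm B x, hcomm C x, hcomm C B, ← hB, ← hC, ← hD, ← hE, h1, h4, h5, h6,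
      map_zero, neg_zero, zero_add, add_zero] at h
    exact h
  -- identity 8 : B·F = 0
  have h8 : mul B F = 0 := by
    have h := hpol x x B D
    simp only [← hF, h2, map_neg, h3, neg_neg, h5, h7, map_zero, neg_zero, zero_add, add_zero] at h
    have h' : mul B F + mul B F = 0 := by rw [← h]; try abel
    exact aux_two_smul (k := k) _ h'
  -- identity 9 : C·E = 0
  have h9 : mul C E = 0 := by
    have h := hpol x C C x
    simp only [hcomm C x, hcomm C B, ← hB, ← hE, h1, map_zero, zero_add, add_zero] at h
    have h' : mul C E + mul C E = 0 := by rw [← h]; try abel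
    exact aux_two_smul (k := k) _ h'
  -- identity 10 : D·D = 0
  have h10 : mul D D = 0 := by
    have h := hpol x B D x
    simp only [hcomm B x, hcomm D x, hcomm D B, hcomm D C, ← hB, ← hC, ← hD, ← hF,
      h1, h2, map_neg, h3, neg_neg, h6, h7, h8, map_zero, neg_zero, zero_add, add_zero] at h
    exact h
  -- identity 11 : C·F = 0
  have h11 : mul C F = 0 := by
    have h := hpol x x C D
    simp only [h2, map_neg, h3, neg_neg, h6, h9, map_zero, neg_zero, zero_add, add_zero] at h
    have h' : mul C F + mul C F = 0 := by rw [← h]; try abel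
    exact aux_two_smul (k := k) _ h'
  -- identity 12 : D·E = 0
  have h12 : mul D E = 0 := by
    have h := hpol x C D x
    simp only [hcomm C x, hcomm D x, hcomm C B, hcomm D B, ← hB, ← hE, ← hF,
      h1, h2, map_neg, h3, neg_neg, h9, h11, map_zero, neg_zero, zero_add, add_zero] at h
    exact h
  -- identity 13 : D·F = 0
  have h13 : mul D F = 0 := by
    have h := hpol x x D D
    simp only [h2, map_neg, h3, neg_neg, h10, h12, map_zero, neg_zero, zero_add, add_zero] at h
    have h' : mul D F + mul D F = 0 := by rw [← h]; try abel
    exact aux_two_smul (k := k) _ h'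
  -- identity 14 : E·E = 0
  have h14 : mul E E = 0 := by
    have h := hpol x C E x
    simp only [hcomm C x, hcomm E x, hcomm C B, hcomm E B, ← hB, ← hE,
      h1, h3, map_neg, h5, h7, h11, map_zero, neg_zero, zero_add, add_zero] at h
    exact h
  -- identity 15 : E·F = 0
  have h15 : mul E F = 0 := by
    have h := hpol x D E x
    simp only [hcomm D x, hcomm E x, hcomm D B, hcomm E B, ← hB, ← hF,
      h2, map_neg, h3, neg_neg, h5, h7, h13, h14, map_zero, neg_zero, zero_add, add_zero] at h
    have h' : mul E F + mul E F = 0 := by rw [← h]; try abel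
    exact aux_two_smul (k := k) _ h'
  -- identity 16 : F·F = 0
  have h16 : mul F F = 0 := by
    have h := hpol x D F x
    simp only [hcomm D x, hcomm F x, hcomm D B, hcomm F B, hcomm F E, ← hB, ← hF,
      h2, map_neg, h3, neg_neg, h5, h8, h15, map_zero, neg_zero, zero_add, add_zero] at h
    have h' : mul F F + mul F F = 0 := by rw [← h]; try abel
    exact aux_two_smul (k := k) _ h'
  -- multiplication table for g18
  have table : ∀ i j, 1 ≤ i → 1 ≤ j →
      ∃ s : k, mul (g18 mul x i) (g18 mul x j) = s • g18 mul x (i + j) := by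
    intro i j hi hj
    by_cases hi7 : 7 ≤ i
    · exact ⟨0, by rw [g18_big mul x i hi7]; simp⟩
    by_cases hj7 : 7 ≤ j
    · exact ⟨0, by rw [g18_big mul x j hj7]; simp⟩
    have hi6 : i ≤ 6 := by omega
    have hj6 : j ≤ 6 := by omega
    interval_cases i <;> interval_cases j <;>
      norm_num [g18] <;>
      simp only [← hB, ← hC, ← hD, ← hE, ← hF,
        hcomm B x, hcomm C x, hcomm D x, hcomm E x, hcomm F x,
        hcomm C B, hcomm D B, hcomm E B, hcomm F B,
        hcomm D C, hcomm E C, hcomm F C, hcomm E D, hcomm F D, hcomm F E] <;>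
      first
        | exact ⟨1, (one_smul k _).symm⟩
        | exact ⟨1, by rw [one_smul]; exact h4⟩
        | exact ⟨-1, by rw [neg_smul, one_smul]; exact h2⟩
        | exact ⟨-1, by rw [neg_smul, one_smul]; exact h3⟩
        | exact ⟨0, by rw [zero_smul]; first | exact h1 | exact h5 | exact h6 | exact h7 | exact h8 | exact h9 | exact h10 | exact h11 | exact h12 | exact h13 | exact h14 | exact h15 | exact h16⟩
        | (first | exact h1 | exact h5 | exact h6 | exact h7 | exact h8 | exact h9 | exact h10 | exact h11 | exact h12 | exact h13 | exact h14 | exact h15 | exact h16)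
  -- main claim : T q x is a scalar multiple of g18 q
  have main : ∀ q, 1 ≤ q → ∃ t : k, T q x = t • g18 mul x q := by
    intro q
    induction q using Nat.strong_induction_on with
    | _ q ih =>
      intro hq
      rcases eq_or_lt_of_le hq with h1q | h1q
      · refine ⟨1, ?_⟩
        rw [← h1q, hT1, one_smul]
        norm_num [g18]
      · rw [hTq q h1q x]
        apply aux_sum_smul
        intro pr hpr
        simp only [Finset.mem_filter, Finset.HasAntidiagonal.mem_antidiagonal] at hpr
        obtain ⟨hsum, hi0, hj0⟩ := hpr
        have hi1 : 1 ≤ pr.1 := Nat.one_le_iff_ne_zero.mpr hi0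
        have hj1 : 1 ≤ pr.2 := Nat.one_le_iff_ne_zero.mpr hj0
        obtain ⟨t1, ht1⟩ := ih pr.1 (by omega) hi1
        obtain ⟨t2, ht2⟩ := ih pr.2 (by omega) hj1
        obtain ⟨s, hs⟩ := table pr.1 pr.2 hi1 hj1
        refine ⟨t1 * t2 * s, ?_⟩
        rw [ht1, ht2]
        simp only [map_smul, LinearMap.smul_apply, hs, hsum]
        module
  obtain ⟨t, ht⟩ := main q (by omega)
  rw [ht, g18_big mul x q hq, smul_zero]
end

section
/- Let (A, μ) be a symmetric d-linear algebra over a field of characteristic zero with T_q defined by T_1(x)=x, T_q(x)=Σ_{i_1+...+i_d=q} μ(T_{i_1}(x),...,T_{i_d}(x)). Then for every q ≥ 1, the identity γ(g(x)) = x holds formally when truncated at degree q: the degree-q homogeneous component (in x) of Σ_{j≥1} T_j(x − μ(x,...,x)) equals x if q = 1 and 0 if q > 1. -/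
open Finset

lemma stmt19_poly_zero {k A : Type*} [Field k] [CharZero k] [AddCommGroup A] [Module k A]
    {N : ℕ} {f : ℕ → A} (h : ∀ s : k, ∑ q ∈ range N, s ^ q • f q = 0) :
    ∀ q < N, f q = 0 := by
  intro q hq
  let b := Module.Basis.ofVectorSpace k A
  apply b.ext_elem
  intro i
  simp only [map_zero, Finsupp.coe_zero, Pi.zero_apply]
  set p : Polynomial k := ∑ q ∈ range N, Polynomial.C (b.repr (f q) i) * Polynomial.X ^ q with hp
  have hpz : p = 0 := by
    apply Polynomial.funext
    intro s
    have := congrArg (fun y => b.repr y i) (h s)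
    simp only [map_sum, map_smul, Finsupp.coe_smul, Finsupp.coe_finset_sum, Pi.smul_apply,
      Finset.sum_apply, map_zero, Finsupp.coe_zero, Pi.zero_apply, smul_eq_mul] at this
    simp [hp, Polynomial.eval_finset_sum, this]
    rw [← this]
    exact Finset.sum_congr rfl fun x _ => mul_comm _ _
  have := congrArg (fun p => Polynomial.coeff p q) hpz
  simp only [hp, Polynomial.finset_sum_coeff, Polynomial.coeff_C_mul, Polynomial.coeff_X_pow,
    Polynomial.coeff_zero] at this
  rwa [Finset.sum_eq_single q (by intro b _ hb; simp [Ne.symm hb])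
    (by intro h; exact absurd (mem_range.2 hq) h), if_pos rfl, mul_one] at this

lemma stmt19_poly_eq {k A : Type*} [Field k] [CharZero k] [AddCommGroup A] [Module k A]
    {N : ℕ} {f g : ℕ → A}
    (h : ∀ s : k, ∑ q ∈ range N, s ^ q • f q = ∑ q ∈ range N, s ^ q • g q) :
    ∀ q < N, f q = g q := by
  intro q hq
  have := stmt19_poly_zero (f := fun q => f q - g q) (k := k)
    (fun s => by simp only [smul_sub, Finset.sum_sub_distrib, h s, sub_self]) q hq
  exact sub_eq_zero.mp this

lemma stmt19_sum_piFinset_antidiag {A : Type*} [AddCommMonoid A] {d : ℕ} (N : ℕ)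
    (F : (Fin d → ℕ) → A) (hF : ∀ r, N < ∑ i, r i → F r = 0) :
    ∑ r ∈ Fintype.piFinset (fun _ : Fin d => range (N + 1)), F r =
      ∑ p ∈ range (N + 1), ∑ r ∈ Finset.Nat.antidiagonalTuple d p, F r := by
  have h1 : ∀ p ∈ range (N + 1), Finset.Nat.antidiagonalTuple d p =
      ((Fintype.piFinset (fun _ : Fin d => range (N + 1))).filter
        (fun r => ∑ i, r i ≤ N)).filter (fun r => ∑ i, r i = p) := by
    intro p hp
    rw [mem_range] at hp
    ext r
    simp only [Finset.Nat.mem_antidiagonalTuple, mem_filter, Fintype.mem_piFinset, mem_range]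
    constructor
    · intro h
      refine ⟨⟨fun i => ?_, by omega⟩, h⟩
      have := Finset.single_le_sum (f := r) (fun i _ => Nat.zero_le _) (mem_univ i)
      omega
    · exact fun h => h.2
  rw [show (∑ p ∈ range (N+1), ∑ r ∈ Finset.Nat.antidiagonalTuple d p, F r) = _ from
      Finset.sum_congr rfl (fun p hp => by rw [h1 p hp]),
    Finset.sum_fiberwise_of_maps_to (fun r hr => by
      rw [mem_filter] at hr; rw [mem_range]; omega)]
  exact (Finset.sum_filter_of_ne (fun r _ hr => by
    by_contra h; exact hr (hF r (by omega)))).symm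

/-- The formal inverse identity `∑_j T_j ∘ g = Id`: the degree-`q` homogeneous component
(in `x`) of `∑_{j ≥ 1} T_j(x - μ(x,...,x))` equals `x` if `q = 1` and `0` if `q > 1`.
Here `C j q x` denotes the degree-`q` homogeneous component of `T j (g x)`, characterized
by `T j (g (s • x)) = ∑_q s^q • C j q x`. -/
theorem stmt19 {k A : Type*} [Field k] [CharZero k] [AddCommGroup A] [Module k A]
    {d : ℕ} (hd : 2 ≤ d) (μ : MultilinearMap k (fun _ : Fin d => A) A)
    (hsymm : ∀ (σ : Equiv.Perm (Fin d)) (v : Fin d → A), μ (v ∘ σ) = μ v)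
    (T : ℕ → A → A)
    (hT1 : ∀ x, T 1 x = x)
    (hTq : ∀ q, 1 < q → ∀ x, T q x =
      ∑ c ∈ (Finset.Nat.antidiagonalTuple d q).filter (fun c => ∀ i, c i ≠ 0),
        μ (fun i => T (c i) x))
    (C : ℕ → ℕ → A → A)
    (hC : ∀ j, 1 ≤ j → ∀ (x : A) (s : k),
      T j ((s • x) - μ (fun _ => s • x)) =
        ∑ q ∈ Finset.range (d * j + 1), s ^ q • C j q x)
    (hC0 : ∀ j q (x : A), d * j < q → C j q x = 0) :
    ∀ (x : A) (q M : ℕ), 1 ≤ q → q ≤ M →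
      (∑ j ∈ Finset.Icc 1 M, C j q x) = if q = 1 then x else 0 := by
  intro x
  have hnt : Nontrivial (Fin d) := Fin.nontrivial_iff_two_le.mpr hd
  -- the explicit formula for C 1
  have hC1 : ∀ p, C 1 p x = if p = 1 then x else if p = d then -μ (fun _ => x) else 0 := by
    have key : ∀ s : k, ∑ p ∈ range (d * 1 + 1), s ^ p • C 1 p x =
        ∑ p ∈ range (d * 1 + 1),
          s ^ p • (if p = 1 then x else if p = d then -μ (fun _ => x) else 0) := by
      intro s
      rw [← hC 1 le_rfl x s, hT1]
      have hμ : μ (fun _ => s • x) = s ^ d • μ (fun _ => x) := by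
        rw [show (fun _ : Fin d => s • x) = fun i : Fin d => s • (fun _ : Fin d => x) i from rfl,
          MultilinearMap.map_smul_univ]
        simp [Finset.prod_const, Finset.card_univ]
      rw [hμ]
      have hsub : ({1, d} : Finset ℕ) ⊆ range (d * 1 + 1) := by
        intro p hp
        simp only [mem_insert, mem_singleton] at hp
        rw [mem_range]; omega
      rw [← Finset.sum_subset hsub (fun p hp hnp => by
        simp only [mem_insert, mem_singleton, not_or] at hnp
        simp [hnp.1, hnp.2]),
        Finset.sum_pair (by omega : (1:ℕ) ≠ d)]
      rw [if_neg (by omega : ¬ (1:ℕ) = d), if_pos rfl, if_neg (by omega : ¬ d = 1), if_pos rfl]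
      simp [sub_eq_add_neg, smul_neg]
    intro p
    by_cases hp : p < d * 1 + 1
    · exact stmt19_poly_eq key p hp
    · rw [hC0 1 p x (by omega)]
      have h1 : p ≠ 1 := by omega
      have h2 : p ≠ d := by omega
      simp [h1, h2]
  -- the recurrence for C j, j ≥ 2
  have hrec : ∀ j, 2 ≤ j → ∀ p, C j p x =
      ∑ c ∈ (Finset.Nat.antidiagonalTuple d j).filter (fun c => ∀ i, c i ≠ 0),
        ∑ r ∈ Finset.Nat.antidiagonalTuple d p, μ (fun i => C (c i) (r i) x) := by
    intro j hj
    -- the right-hand side vanishes above degree d*j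
    have hRz : ∀ p, d * j < p →
        (∑ c ∈ (Finset.Nat.antidiagonalTuple d j).filter (fun c => ∀ i, c i ≠ 0),
          ∑ r ∈ Finset.Nat.antidiagonalTuple d p, μ (fun i => C (c i) (r i) x)) = 0 := by
      intro p hp
      refine Finset.sum_eq_zero fun c hc => Finset.sum_eq_zero fun r hr => ?_
      rw [mem_filter, Finset.Nat.mem_antidiagonalTuple] at hc
      rw [Finset.Nat.mem_antidiagonalTuple] at hr
      have hex : ∃ i, d * c i < r i := by
        by_contra h
        push_neg at h
        have : ∑ i, r i ≤ ∑ i, d * c i := Finset.sum_le_sum fun i _ => h i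
        rw [← Finset.mul_sum, hc.1] at this
        omega
      obtain ⟨i, hi⟩ := hex
      exact MultilinearMap.map_coord_zero μ i (hC0 _ _ _ hi)
    have key : ∀ s : k, ∑ p ∈ range (d * j + 1), s ^ p • C j p x =
        ∑ p ∈ range (d * j + 1), s ^ p •
          ∑ c ∈ (Finset.Nat.antidiagonalTuple d j).filter (fun c => ∀ i, c i ≠ 0),
            ∑ r ∈ Finset.Nat.antidiagonalTuple d p, μ (fun i => C (c i) (r i) x) := by
      intro s
      rw [← hC j (by omega) x s, hTq j (by omega)]
      have step : ∀ c ∈ (Finset.Nat.antidiagonalTuple d j).filter (fun c => ∀ i, c i ≠ 0),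
          μ (fun i => T (c i) ((s • x) - μ (fun _ => s • x))) =
            ∑ p ∈ range (d * j + 1), ∑ r ∈ Finset.Nat.antidiagonalTuple d p,
              s ^ (∑ i, r i) • μ (fun i => C (c i) (r i) x) := by
        intro c hc
        rw [mem_filter, Finset.Nat.mem_antidiagonalTuple] at hc
        have hci : ∀ i, c i ≤ j := fun i => by
          have := Finset.single_le_sum (f := c) (fun i _ => Nat.zero_le _) (mem_univ i)
          omega
        have h1 : (fun i => T (c i) ((s • x) - μ (fun _ => s • x))) =
            fun i => ∑ p ∈ range (d * c i + 1), s ^ p • C (c i) p x := by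
          funext i
          exact hC (c i) (Nat.one_le_iff_ne_zero.mpr (hc.2 i)) x s
        rw [h1, MultilinearMap.map_sum_finset μ (fun i p => s ^ p • C (c i) p x)
          (fun i => range (d * c i + 1))]
        have h2 : ∀ r : Fin d → ℕ,
            (μ fun i => s ^ (r i) • C (c i) (r i) x) =
              s ^ (∑ i, r i) • μ (fun i => C (c i) (r i) x) := by
          intro r
          rw [MultilinearMap.map_smul_univ μ (fun i => s ^ (r i)) (fun i => C (c i) (r i) x),
            Finset.prod_pow_eq_pow_sum]
        rw [Finset.sum_congr rfl fun r _ => h2 r]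
        have hss : Fintype.piFinset (fun i => range (d * c i + 1)) ⊆
            Fintype.piFinset (fun _ : Fin d => range (d * j + 1)) :=
          Fintype.piFinset_subset _ _ (fun i => Finset.range_subset_range.mpr (by
            have := hci i; nlinarith))
        rw [Finset.sum_subset hss
          (fun r hr hnr => by
            rw [Fintype.mem_piFinset] at hnr
            push_neg at hnr
            obtain ⟨i, hi⟩ := hnr
            rw [mem_range, not_lt] at hi
            exact smul_eq_zero_of_right _
              (MultilinearMap.map_coord_zero μ i (hC0 (c i) (r i) x (by omega))))]
        exact stmt19_sum_piFinset_antidiag (d * j)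
          (fun r => s ^ (∑ i, r i) • μ (fun i => C (c i) (r i) x))
          (fun r hr => by
            have hex : ∃ i, d * c i < r i := by
              by_contra h
              push_neg at h
              have : ∑ i, r i ≤ ∑ i, d * c i := Finset.sum_le_sum fun i _ => h i
              rw [← Finset.mul_sum, hc.1] at this
              omega
            obtain ⟨i, hi⟩ := hex
            exact smul_eq_zero_of_right _
              (MultilinearMap.map_coord_zero μ i (hC0 (c i) (r i) x hi)))
      rw [Finset.sum_congr rfl step, Finset.sum_comm]
      refine Finset.sum_congr rfl fun p _ => ?_
      rw [Finset.smul_sum]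
      refine Finset.sum_congr rfl fun c _ => ?_
      rw [Finset.smul_sum]
      refine Finset.sum_congr rfl fun r hr => ?_
      rw [Finset.Nat.mem_antidiagonalTuple] at hr
      rw [hr]
    intro p
    by_cases hp : p < d * j + 1
    · exact stmt19_poly_eq key p hp
    · rw [hC0 j p x (by omega), hRz p (by omega)]
  -- vanishing below degree j
  have hvan : ∀ j, ∀ p < j, C j p x = 0 := by
    intro j
    induction j using Nat.strong_induction_on with
    | _ j IH =>
      intro p hp
      match j, hp with
      | 1, hp =>
        have : p = 0 := by omega
        subst this
        rw [hC1 0, if_neg (by omega), if_neg (by omega : ¬ (0:ℕ) = d)]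
      | (m+2), hp =>
        rw [hrec (m+2) (by omega) p]
        refine Finset.sum_eq_zero fun c hc => Finset.sum_eq_zero fun r hr => ?_
        rw [mem_filter, Finset.Nat.mem_antidiagonalTuple] at hc
        rw [Finset.Nat.mem_antidiagonalTuple] at hr
        have hex : ∃ i, r i < c i := by
          by_contra h
          push_neg at h
          have : ∑ i, c i ≤ ∑ i, r i := Finset.sum_le_sum fun i _ => h i
          omega
        obtain ⟨i, hi⟩ := hex
        have hlt : c i < m + 2 := by
          obtain ⟨i₀, hi₀⟩ := exists_ne i
          have h2 : c i + c i₀ ≤ ∑ i', c i' :=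
            Finset.add_le_sum (fun _ _ => Nat.zero_le _) (mem_univ i) (mem_univ i₀) (Ne.symm hi₀)
          have h3 : 1 ≤ c i₀ := Nat.one_le_iff_ne_zero.mpr (hc.2 i₀)
          omega
        exact MultilinearMap.map_coord_zero μ i (IH (c i) hlt (r i) hi)
  -- the main induction
  have main : ∀ p, 1 ≤ p → ∑ j ∈ Icc 1 p, C j p x = if p = 1 then x else 0 := by
    intro p
    induction p using Nat.strong_induction_on with
    | _ p IH =>
      intro hp1
      rcases eq_or_lt_of_le hp1 with h1 | h1
      · rw [← h1]
        simp [Icc_self, hC1 1]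
      · -- p ≥ 2
        have hp2 : 2 ≤ p := h1
        have hsplit : Icc 1 p = insert 1 (Icc 2 p) := by
          ext j; simp only [mem_Icc, mem_insert]; omega
        rw [hsplit, Finset.sum_insert (by simp [mem_Icc])]
        have hC1p : C 1 p x = if p = d then -μ (fun _ => x) else 0 := by
          rw [hC1 p, if_neg (by omega)]
        have hrest : ∑ j ∈ Icc 2 p, C j p x = if p = d then μ (fun _ => x) else 0 := by
          have hstep : ∀ j ∈ Icc 2 p, C j p x =
              ∑ r ∈ Finset.Nat.antidiagonalTuple d p,
                ∑ c ∈ (Finset.Nat.antidiagonalTuple d j).filter (fun c => ∀ i, c i ≠ 0),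
                  μ (fun i => C (c i) (r i) x) := by
            intro j hj
            rw [mem_Icc] at hj
            rw [hrec j hj.1 p, Finset.sum_comm]
          rw [Finset.sum_congr rfl hstep, Finset.sum_comm]
          -- for each r, collapse the double sum over j and c
          have claim1 : ∀ r ∈ Finset.Nat.antidiagonalTuple d p,
              (∑ j ∈ Icc 2 p,
                ∑ c ∈ (Finset.Nat.antidiagonalTuple d j).filter (fun c => ∀ i, c i ≠ 0),
                  μ (fun i => C (c i) (r i) x)) =
              μ (fun i => ∑ j ∈ Icc 1 (r i), C j (r i) x) := by
            intro r hr
            rw [Finset.Nat.mem_antidiagonalTuple] at hr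
            rw [MultilinearMap.map_sum_finset μ (fun i j => C j (r i) x)
              (fun i => Icc 1 (r i))]
            have inner : ∀ j ∈ Icc 2 p,
                (∑ c ∈ (Finset.Nat.antidiagonalTuple d j).filter (fun c => ∀ i, c i ≠ 0),
                  μ (fun i => C (c i) (r i) x)) =
                ∑ c ∈ (Fintype.piFinset (fun i => Icc 1 (r i))).filter
                    (fun c => ∑ i, c i = j), μ (fun i => C (c i) (r i) x) := by
              intro j hj
              rw [← Finset.sum_filter_of_ne
                (p := fun c => c ∈ Fintype.piFinset (fun i => Icc 1 (r i)))
                (fun c hc hne => by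
                  by_contra h
                  rw [mem_filter] at hc
                  simp only [Fintype.mem_piFinset, mem_Icc] at h
                  push_neg at h
                  obtain ⟨i, hi⟩ := h
                  have hci : 1 ≤ c i := Nat.one_le_iff_ne_zero.mpr (hc.2 i)
                  have : r i < c i := hi hci
                  exact hne (MultilinearMap.map_coord_zero μ i (hvan (c i) (r i) this)))]
              congr 1
              ext c
              simp only [mem_filter, Finset.Nat.mem_antidiagonalTuple, Fintype.mem_piFinset,
                mem_Icc]
              constructor
              · rintro ⟨⟨h1, _⟩, h2⟩
                exact ⟨h2, h1⟩
              · rintro ⟨h1, h2⟩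
                exact ⟨⟨h2, fun i => by have := h1 i; omega⟩, h1⟩
            rw [Finset.sum_congr rfl inner]
            exact Finset.sum_fiberwise_of_maps_to (fun c hc => by
              rw [Fintype.mem_piFinset] at hc
              rw [mem_Icc]
              constructor
              · calc 2 ≤ d := hd
                  _ = ∑ _i : Fin d, 1 := by simp
                  _ ≤ ∑ i, c i := Finset.sum_le_sum fun i _ => (mem_Icc.mp (hc i)).1
              · calc ∑ i, c i ≤ ∑ i, r i :=
                    Finset.sum_le_sum fun i _ => (mem_Icc.mp (hc i)).2
                  _ = p := hr) _
          rw [Finset.sum_congr rfl claim1]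
          -- now evaluate using the induction hypothesis
          have key : ∀ r ∈ Finset.Nat.antidiagonalTuple d p, r ≠ (fun _ => 1) →
              μ (fun i => ∑ j ∈ Icc 1 (r i), C j (r i) x) = 0 := by
            intro r hr hne
            rw [Finset.Nat.mem_antidiagonalTuple] at hr
            by_cases h0 : ∃ i, r i = 0
            · obtain ⟨i, hi⟩ := h0
              refine MultilinearMap.map_coord_zero μ i ?_
              rw [hi]
              simp
            · push_neg at h0
              have hpos : ∀ i, 1 ≤ r i := fun i => Nat.one_le_iff_ne_zero.mpr (h0 i)
              have hne2 : ∃ i, r i ≠ 1 := by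
                by_contra h
                push_neg at h
                exact hne (funext h)
              obtain ⟨i, hi⟩ := hne2
              have hlt : r i < p := by
                obtain ⟨i₀, hi₀⟩ := exists_ne i
                have h2 : r i + r i₀ ≤ ∑ i', r i' :=
                  Finset.add_le_sum (fun _ _ => Nat.zero_le _) (mem_univ i) (mem_univ i₀)
                    (Ne.symm hi₀)
                have := hpos i₀
                omega
              refine MultilinearMap.map_coord_zero μ i ?_
              rw [IH (r i) hlt (hpos i), if_neg hi]
          by_cases hpd : p = d
          · rw [if_pos hpd]
            have hmem : (fun _ : Fin d => 1) ∈ Finset.Nat.antidiagonalTuple d p := by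
              rw [Finset.Nat.mem_antidiagonalTuple]
              simp [hpd]
            rw [Finset.sum_eq_single_of_mem _ hmem (fun r hr hne => key r hr hne)]
            congr 1
            funext i
            simp [hC1 1]
          · rw [if_neg hpd]
            refine Finset.sum_eq_zero fun r hr => ?_
            refine key r hr ?_
            intro h
            subst h
            rw [Finset.Nat.mem_antidiagonalTuple] at hr
            simp at hr
            omega
        rw [hC1p, hrest, if_neg (by omega : ¬ p = 1)]
        by_cases hpd : p = d <;> simp [hpd]
  -- conclusion
  intro q M hq hqM
  rw [← Finset.sum_subset (Finset.Icc_subset_Icc_right hqM)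
    (fun j hj hnj => by
      rw [mem_Icc] at hj hnj
      push_neg at hnj
      exact hvan j q (hnj (by omega)))]
  exact main q hq
end
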